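/- arXiv:1307.0972 — 6 statements merged into one kernel-verified Lean document; each statement's English description precedes it below -/
import Mathlib

section
/- Let H × H act on End_A(R) by ((v,w)·h)(f) = v•(h(w⁻¹•f)) for v, w ∈ H, h ∈ End_A(R), f ∈ R. Then an endomorphism h ∈ End_A(R) is H × H-invariant if and only if h lies in the image of Θ : End_A(S) → End_A(R), f ↦ I ∘ f ∘ Av; equivalently, h is H × H-invariant if and only if h(S) ⊆ S and h = I ∘ (h restricted to S) ∘ Av. In particular End_A(R)^{H×H} = Θ(End_A(S)). -/
/-!
Invariance under `H × H` splits into invariance under the left copy of `H`, which says that `h`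
takes values in `S = R^H`, and invariance under the right copy, which says `h (w • f) = h f`.
Since `h` is `k`-linear and `|H|` is invertible in `k`, right invariance is equivalent to
`h ∘ Av = h`, because `Av f` is the mean of the `H`-orbit of `f`. An endomorphism with values in
`S` that factors through `Av` is `I ∘ g ∘ Av` for its restriction `g` to `S`, and conversely
every `I ∘ g ∘ Av` has both properties because `Av` is a retraction onto `S`.
-/

open Finset

theorem sum_smul_smul_eq_sum_smul {G M : Type*} [Group G] [Fintype G] [AddCommMonoid M]
    [MulAction G M] (g : G) (m : M) : ∑ x : G, x • g • m = ∑ x : G, x • m :=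
  Fintype.sum_equiv (Equiv.mulRight g) _ _ fun x => (mul_smul x g m).symm

theorem smul_map_inv_smul_eq_iff {G X Y : Type*} [Group G] [MulAction G X] [MulAction G Y]
    (φ : X → Y) :
    (∀ (v w : G) (x : X), v • φ (w⁻¹ • x) = φ x) ↔
      (∀ (v : G) (x : X), v • φ x = φ x) ∧ ∀ (w : G) (x : X), φ (w • x) = φ x := by
  refine ⟨fun hφ => ⟨fun v x => by simpa using hφ v 1 x,
      fun w x => by simpa using hφ 1 w⁻¹ x⟩,
    fun ⟨hleft, hright⟩ v w x => by rw [hleft, hright]⟩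

section Averaging

variable {k R G A : Type*} [DivisionRing k] [AddCommMonoid R] [Module k R]
  [Group G] [Fintype G] [MulAction G R] [Semiring A] [Module A R] {S : Submodule A R}
  {Av : R →ₗ[A] S}

theorem average_smul
    (hAv : ∀ r : R, (Av r : R) = (Fintype.card G : k)⁻¹ • ∑ g : G, g • r)
    (g : G) (r : R) : Av (g • r) = Av r := by
  ext
  rw [hAv, hAv, sum_smul_smul_eq_sum_smul]

variable [CharZero k] [SMul k A] [IsScalarTower k A R]

theorem map_average_of_map_smul
    (hAv : ∀ r : R, (Av r : R) = (Fintype.card G : k)⁻¹ • ∑ g : G, g • r)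
    (h : Module.End A R) (hh : ∀ (g : G) (f : R), h (g • f) = h f) (f : R) :
    h (Av f) = h f := by
  have hcard : (Fintype.card G : k) ≠ 0 := Nat.cast_ne_zero.mpr Fintype.card_ne_zero
  rw [hAv, LinearMap.map_smul_of_tower, map_sum]
  simp only [hh, sum_const, card_univ, ← Nat.cast_smul_eq_nsmul k, smul_smul,
    inv_mul_cancel₀ hcard, one_smul]

theorem smul_map_inv_smul_eq_iff_mem_and_map_average
    (hS : ∀ r : R, r ∈ S ↔ ∀ g : G, g • r = r)
    (hAv : ∀ r : R, (Av r : R) = (Fintype.card G : k)⁻¹ • ∑ g : G, g • r)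
    (h : Module.End A R) :
    (∀ (v w : G) (f : R), v • h (w⁻¹ • f) = h f) ↔
      (∀ f : R, h f ∈ S) ∧ ∀ f : R, h (Av f) = h f := by
  simp only [smul_map_inv_smul_eq_iff, hS]
  refine and_congr forall_comm ⟨map_average_of_map_smul hAv h, fun hh g f => ?_⟩
  rw [← hh, average_smul hAv, hh]

end Averaging

theorem exists_subtype_comp_comp_eq_iff {A R : Type*} [Semiring A] [AddCommMonoid R]
    [Module A R] {S : Submodule A R} {Av : R →ₗ[A] S} (hAvI : ∀ s : S, Av (s : R) = s)
    (h : Module.End A R) :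
    (∃ g : Module.End A S, S.subtype ∘ₗ g ∘ₗ Av = h) ↔
      (∀ f : R, h f ∈ S) ∧ ∀ f : R, h (Av f) = h f := by
  constructor
  · rintro ⟨g, rfl⟩
    exact ⟨fun f => (g (Av f)).2, fun f => by simp [hAvI]⟩
  · rintro ⟨hmem, hAvh⟩
    exact ⟨h.codRestrict S hmem ∘ₗ S.subtype, LinearMap.ext fun f => hAvh f⟩

theorem mem_and_map_average_iff {A R : Type*} [Semiring A] [AddCommMonoid R] [Module A R]
    {S : Submodule A R} (Av : R →ₗ[A] S) (h : Module.End A R) :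
    ((∀ f : R, h f ∈ S) ∧ ∀ f : R, h (Av f) = h f) ↔
      (∀ s : R, s ∈ S → h s ∈ S) ∧ ∀ f : R, h f = h (Av f) := by
  refine ⟨fun ⟨hmem, hAvh⟩ => ⟨fun s _ => hmem s, fun f => (hAvh f).symm⟩,
    fun ⟨hmaps, hAvh⟩ => ⟨fun f => ?_, fun f => (hAvh f).symm⟩⟩
  rw [hAvh]
  exact hmaps _ (Av f).2

theorem invariant_endomorphisms_eq_corner_image_general
    (k : Type*) [Field k] [CharZero k]
    (R : Type*) [CommRing R] [Algebra k R]
    (W : Type*) [Group W] [MulSemiringAction W R]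
    (H : Subgroup W) [Fintype H]
    -- A = R^W, the invariant subalgebra
    (A : Subalgebra k R)
    -- S = R^H, viewed as an A-submodule of R
    (S : Submodule A R) (hS : ∀ r : R, r ∈ S ↔ ∀ w : H, (w : W) • r = r)
    -- Av : R → S is the averaging map, an A-module map
    (Av : R →ₗ[A] S)
    (hAv : ∀ r : R, (Av r : R) = (Fintype.card H : k)⁻¹ • ∑ w : H, (w : W) • r)
    -- Av ∘ I = id_S
    (hAvI : ∀ s : S, Av (s : R) = s)
    -- Θ : End_A(S) → End_A(R), f ↦ I ∘ f ∘ Av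
    (Θ : Module.End A S → Module.End A R)
    (hΘ : ∀ f : Module.End A S, Θ f = (S.subtype.comp f).comp Av)
    (h : Module.End A R) :
    ((∀ (v w : H) (f : R), (v : W) • h ((w : W)⁻¹ • f) = h f) ↔ h ∈ Set.range Θ) ∧
    ((∀ (v w : H) (f : R), (v : W) • h ((w : W)⁻¹ • f) = h f) ↔
      ((∀ s : R, s ∈ S → h s ∈ S) ∧ ∀ f : R, h f = h ((Av f : R)))) := by
  have hinv := smul_map_inv_smul_eq_iff_mem_and_map_average (G := H) hS hAv h
  refine ⟨hinv.trans ?_, hinv.trans (mem_and_map_average_iff Av h)⟩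
  simp only [Set.mem_range, hΘ]
  exact (exists_subtype_comp_comp_eq_iff hAvI h).symm

/-- with `H × H` acting on `End_A(R)` by `((v,w)·h)(f) = v•(h(w⁻¹•f))`,
an endomorphism `h` is `H × H`-invariant iff it lies in the image of
`Θ : End_A(S) → End_A(R)`, `f ↦ I ∘ f ∘ Av`, iff `h(S) ⊆ S` and `h = I ∘ (h|_S) ∘ Av`.
In particular `End_A(R)^{H×H} = Θ(End_A(S))`. -/
theorem invariant_endomorphisms_eq_corner_image
    (k : Type*) [Field k] [CharZero k]
    (R : Type*) [CommRing R] [Algebra k R]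
    (W : Type*) [Group W] [Fintype W] [MulSemiringAction W R] [SMulCommClass W k R]
    (H : Subgroup W) [Fintype H]
    -- A = R^W, the invariant subalgebra
    (A : Subalgebra k R) (hA : ∀ r : R, r ∈ A ↔ ∀ w : W, w • r = r)
    -- S = R^H, viewed as an A-submodule of R
    (S : Submodule A R) (hS : ∀ r : R, r ∈ S ↔ ∀ w : H, (w : W) • r = r)
    -- Av : R → S is the averaging map, an A-module map
    (Av : R →ₗ[A] S)
    (hAv : ∀ r : R, (Av r : R) = (Fintype.card H : k)⁻¹ • ∑ w : H, (w : W) • r)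
    -- Av ∘ I = id_S
    (hAvI : ∀ s : S, Av (s : R) = s)
    -- Θ : End_A(S) → End_A(R), f ↦ I ∘ f ∘ Av
    (Θ : Module.End A S → Module.End A R)
    (hΘ : ∀ f : Module.End A S, Θ f = (S.subtype.comp f).comp Av)
    (h : Module.End A R) :
    ((∀ (v w : H) (f : R), (v : W) • h ((w : W)⁻¹ • f) = h f) ↔ h ∈ Set.range Θ) ∧
    ((∀ (v w : H) (f : R), (v : W) • h ((w : W)⁻¹ • f) = h f) ↔
      ((∀ s : R, s ∈ S → h s ∈ S) ∧ ∀ f : R, h f = h ((Av f : R)))) :=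
  invariant_endomorphisms_eq_corner_image_general k R W H A S hS Av hAv hAvI Θ hΘ h
end

section
/- Consider the case H = W, and let W × W act on End_A(R) by ((v,w)·h)(f) = v•(h(w⁻¹•f)). The map A → End_A(R) sending r ∈ A = R^W to the endomorphism f ↦ r·Av_W(f) (where Av_W(f) = (1/|W|)·∑_{w∈W} w•f) is injective, multiplicative, and its image is exactly the set End_A(R)^{W×W} of W × W-invariant endomorphisms; thus it is a ring isomorphism from A onto End_A(R)^{W×W} (whose unit element is the idempotent I ∘ Av_W). -/
/-! An `A`-linear endomorphism `h` of `R` that is invariant under `W` acting on its argument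
factors through the averaging map, since averaging is `k`-linear: `h f = h (Av f) = Av f * h 1`,
the last step because `Av f ∈ A` and `h` is `A`-linear. Invariance under `W` acting on values puts
`h 1` in `A`, so `h` is `r • Av` with `r = h 1`. Since `Av` is an `A`-linear idempotent,
`r ↦ r • Av` is then a ring isomorphism from `A` onto these endomorphisms, with unit `Av`. -/

open Finset

section Averaging

variable {k M W : Type*} [Field k] [AddCommGroup M] [Module k M] [Fintype W]

theorem inv_card_smul_sum_const [CharZero k] [Nonempty W] (m : M) :
    (Fintype.card W : k)⁻¹ • ∑ _w : W, m = m := by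
  have hcard : (Fintype.card W : k) ≠ 0 := Nat.cast_ne_zero.2 Fintype.card_ne_zero
  rw [sum_const, card_univ, ← Nat.cast_smul_eq_nsmul k, smul_smul, inv_mul_cancel₀ hcard,
    one_smul]

variable [Group W] [DistribMulAction W M]

variable (k W) in
def average (m : M) : M := (Fintype.card W : k)⁻¹ • ∑ w : W, w • m

theorem average_eq_self [CharZero k] {m : M} (hm : ∀ w : W, w • m = m) :
    average k W m = m := by
  simp only [average, hm, inv_card_smul_sum_const]

theorem average_smul_s2 (w : W) (m : M) : average k W (w • m) = average k W m := by
  unfold average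
  congr 1
  exact Fintype.sum_equiv (Equiv.mulRight w) _ _ fun v => (mul_smul v w m).symm

theorem smul_average [SMulCommClass W k M] (w : W) (m : M) :
    w • average k W m = average k W m := by
  rw [average, smul_comm, smul_sum]
  congr 1
  exact Fintype.sum_equiv (Equiv.mulLeft w) _ _ fun v => (mul_smul w v m).symm

theorem average_average [CharZero k] [SMulCommClass W k M] (m : M) :
    average k W (average k W m) = average k W m :=
  average_eq_self fun w => smul_average w m

theorem map_average [CharZero k] {N : Type*} [AddCommGroup N] [Module k N] (h : M →ₗ[k] N)
    (hh : ∀ (w : W) (m : M), h (w • m) = h m) (m : M) : h (average k W m) = h m := by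
  rw [average, map_smul, map_sum]
  simp only [hh]
  exact inv_card_smul_sum_const (h m)

end Averaging

def IsBiinvariant (W : Type*) {M : Type*} [Group W] [MulAction W M] (h : M → M) : Prop :=
  ∀ (v w : W) (m : M), v • h (w⁻¹ • m) = h m

section Endomorphisms

variable {k R W : Type*} [Field k] [CharZero k] [CommRing R] [Algebra k R]
  [Group W] [Fintype W] [MulSemiringAction W R] [SMulCommClass W k R]

theorem isBiinvariant_iff_exists_smul_eq {A : Subalgebra k R}
    (hA : ∀ r : R, r ∈ A ↔ ∀ w : W, w • r = r) {AvW : Module.End A R}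
    (hAvW : ⇑AvW = average k W) (h : Module.End A R) :
    IsBiinvariant W h ↔ ∃ r : A, r • AvW = h := by
  constructor
  · intro hh
    have h_one_mem : h 1 ∈ A := (hA _).2 fun w => by simpa using hh w 1 1
    have h_smul : ∀ (w : W) (f : R), h (w • f) = h f := fun w f => by
      simpa using (hh 1 w (w • f)).symm
    refine ⟨⟨h 1, h_one_mem⟩, LinearMap.ext fun f => ?_⟩
    have hAv_mem : AvW f ∈ A := (hA _).2 fun w => by rw [hAvW]; exact smul_average w f
    calc (h 1 : R) * AvW f = h ((⟨AvW f, hAv_mem⟩ : A) • 1) := by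
          rw [h.map_smul, Subalgebra.smul_def, smul_eq_mul, mul_comm]
      _ = h (average k W f) := by
          rw [Subalgebra.smul_def, smul_eq_mul, mul_one]
          exact congrArg h (congrFun hAvW f)
      _ = h f := map_average (h.restrictScalars k) h_smul f
  · rintro ⟨r, rfl⟩ v w f
    simp only [LinearMap.smul_apply, hAvW, Subalgebra.smul_def, smul_eq_mul, smul_mul',
      (hA r).1 r.2, average_smul_s2, smul_average]

end Endomorphisms

/-- for `H = W`, the map `A → End_A(R)`, `r ↦ (f ↦ r · Av_W(f))`, is an
injective multiplicative (and additive) map whose image is exactly the set of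
`W × W`-invariant endomorphisms; thus a ring isomorphism from `A` onto
`End_A(R)^{W×W}`, whose unit element is the idempotent `I ∘ Av_W`. -/
theorem fixedRing_iso_doubly_invariant_endomorphisms
    (k : Type*) [Field k] [CharZero k]
    (R : Type*) [CommRing R] [Algebra k R]
    (W : Type*) [Group W] [Fintype W] [MulSemiringAction W R] [SMulCommClass W k R]
    -- A = R^W, the invariant subalgebra
    (A : Subalgebra k R) (hA : ∀ r : R, r ∈ A ↔ ∀ w : W, w • r = r)
    -- Av_W : R → R is the averaging map (composed with the inclusion), an A-module map
    (AvW : Module.End A R)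
    (hAvW : ∀ r : R, AvW r = (Fintype.card W : k)⁻¹ • ∑ w : W, w • r)
    -- Φ : A → End_A(R), r ↦ (f ↦ r · Av_W(f))
    (Φ : A → Module.End A R)
    (hΦ : ∀ (r : A) (f : R), Φ r f = (r : R) * AvW f) :
    Function.Injective Φ ∧
    (∀ a b : A, Φ (a * b) = Φ a * Φ b) ∧
    (∀ a b : A, Φ (a + b) = Φ a + Φ b) ∧
    Set.range Φ =
      {h : Module.End A R | ∀ (v w : W) (f : R), v • h (w⁻¹ • f) = h f} ∧
    (Φ 1 = AvW ∧ AvW * AvW = AvW) ∧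
    (∀ h ∈ Set.range Φ, Φ 1 * h = h ∧ h * Φ 1 = h) := by
  have hAvW_eq : ⇑AvW = average k W := funext hAvW
  obtain rfl : Φ = fun r => r • AvW := funext fun r => LinearMap.ext (hΦ r)
  have hAvW_one : AvW 1 = 1 := by rw [hAvW_eq]; exact average_eq_self smul_one
  have hAvW_idem : AvW * AvW = AvW := LinearMap.ext fun f => by
    simp only [Module.End.mul_apply, hAvW_eq, average_average]
  refine ⟨fun a b hab => ?_, fun a b => ?_, fun a b => add_smul a b AvW,
    Set.ext fun h => (isBiinvariant_iff_exists_smul_eq hA hAvW_eq h).symm,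
    ⟨one_smul A AvW, hAvW_idem⟩, ?_⟩
  · exact Subtype.ext (by simpa [hAvW_one, Subalgebra.smul_def] using LinearMap.congr_fun hab 1)
  · rw [smul_mul_smul_comm, hAvW_idem]
  · rintro _ ⟨r, rfl⟩
    simp only [one_smul, mul_smul_comm, smul_mul_assoc, hAvW_idem, and_self]
end

section
/- The polynomial ring R = ℂ[x_1,…,x_n] is a free module of rank n! over its subalgebra Λ of symmetric polynomials. -/
open MvPolynomial

/-!
Artin's argument. Put `Λ_k = Λ[x_k, …, x_{n-1}]` (`symmetricAdjoinXGe K n k`), so that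
`Λ_n = Λ` and `Λ_0 = R`. The variable `x_k` is a root of `∏_{i ≤ k} (T - x_i)`, a monic
polynomial of degree `k + 1` with coefficients in `Λ_{k+1}`: it is the quotient of
`∏_i (T - x_i) ∈ Λ[T]` by the monic polynomial `∏_{i > k} (T - x_i) ∈ Λ_{k+1}[T]`. Hence `Λ_k`
is spanned over `Λ_{k+1}` by `1, x_k, …, x_k^k`. These powers are independent over `Λ_{k+1}`:
the transposition of `x_i` and `x_k` (`i ≤ k`) fixes `Λ_{k+1}`, so a relation
`∑ c_j x_k^j = 0` yields `∑ c_j x_i^j = 0` for every `i ≤ k`, and the Vandermonde determinant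
of `x_0, …, x_k` is nonzero. Going down from `k = n` to `k = 0`, the monomials `∏ x_i^{α_i}`
with `α_i ≤ i` form a `Λ`-basis of `R`, and there are `n!` of them.
-/

open Set Submodule

theorem linearIndependent_mul_of_le {K R : Type*} [CommRing K] [CommRing R] [Algebra K R]
    {Λ A : Subalgebra K R} (hΛA : Λ ≤ A) {ι κ : Type*} {b : ι → R} {y : κ → R}
    (hbA : ∀ i, b i ∈ A) (hb : LinearIndependent Λ b) (hy : LinearIndependent A y) :
    LinearIndependent Λ fun p : ι × κ => b p.1 * y p.2 := by
  let : Algebra Λ A := (Subalgebra.inclusion hΛA).toAlgebra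
  have : IsScalarTower Λ A R := .of_algebraMap_eq fun _ => rfl
  exact linearIndependent_smul (b := fun i => (⟨b i, hbA i⟩ : A))
    (.of_comp (IsScalarTower.toAlgHom Λ A R).toLinearMap hb) hy

theorem span_subset_span_mul {Λ A R : Type*} [CommRing Λ] [CommRing A] [CommRing R]
    [Algebra Λ R] [Algebra A R] {ι κ : Type*} [Fintype κ] {b : ι → R} {y : κ → R}
    (hA : ∀ a : A, algebraMap A R a ∈ span Λ (range b)) :
    (span A (range y) : Set R) ⊆ span Λ (range fun p : ι × κ => b p.1 * y p.2) := by
  intro z hz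
  obtain ⟨c, rfl⟩ := (mem_span_range_iff_exists_fun A).1 hz
  refine sum_mem fun j _ => ?_
  have hcj : c j • y j ∈ span Λ (range b) * span Λ {y j} := by
    rw [Algebra.smul_def]
    exact mul_mem_mul (hA (c j)) (subset_span rfl)
  rw [span_mul_span] at hcj
  refine span_mono ?_ hcj
  rintro _ ⟨_, ⟨i, rfl⟩, _, rfl, rfl⟩
  exact ⟨(i, j), rfl⟩

namespace Polynomial

variable {A R : Type*} [CommRing A] [CommRing R]

theorem Monic.lifts_of_mul_lifts {f : A →+* R} {g h : R[X]} (hg : g.Monic) (hgl : g ∈ lifts f)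
    (hgh : g * h ∈ lifts f) : h ∈ lifts f := by
  obtain ⟨g', hg'map, -, hg'⟩ := lifts_and_natDegree_eq_and_monic hgl hg
  obtain ⟨p, hp⟩ := (mem_lifts _).1 hgh
  refine (mem_lifts _).2 ⟨p /ₘ g', ?_⟩
  rw [map_divByMonic f hg', hp, hg'map, mul_divByMonic_cancel_left _ hg]

theorem Monic.adjoin_singleton_le_span_pow [Algebra A R] {p : A[X]} (hp : p.Monic) {x : R}
    (hx : aeval x p = 0) :
    Subalgebra.toSubmodule (Algebra.adjoin A {x}) ≤
      span A (range fun j : Fin p.natDegree => x ^ (j : ℕ)) := by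
  intro z hz
  rw [Subalgebra.mem_toSubmodule, Algebra.adjoin_singleton_eq_range_aeval] at hz
  obtain ⟨q, rfl⟩ := hz
  change aeval x q ∈ _
  rcases eq_or_ne p 1 with rfl | hp1
  · have : Subsingleton R := subsingleton_of_zero_eq_one (by simpa using hx.symm)
    exact Subsingleton.elim (0 : R) (aeval x q) ▸ zero_mem _
  rw [← aeval_modByMonic_eq_self_of_root hx,
    aeval_eq_sum_range' (natDegree_modByMonic_lt q hp hp1),
    ← Fin.sum_univ_eq_sum_range (fun j => (q %ₘ p).coeff j • x ^ j)]
  exact sum_mem fun j _ => smul_mem _ _ (subset_span ⟨j, rfl⟩)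

end Polynomial

namespace MvPolynomial

theorem isSymmetric_coeff_prod_X_sub_C_X {σ K : Type*} [Fintype σ] [CommRing K] (m : ℕ) :
    ((∏ i : σ, (Polynomial.X - Polynomial.C (X i : MvPolynomial σ K))).coeff m).IsSymmetric := by
  intro e
  rw [← AlgHom.coe_toRingHom, ← Polynomial.coeff_map, Polynomial.map_prod]
  simp only [Polynomial.map_sub, Polynomial.map_X, Polynomial.map_C, AlgHom.coe_toRingHom,
    rename_X]
  rw [Equiv.prod_comp e (fun i => Polynomial.X - Polynomial.C (X i))]

variable {K : Type*} [CommRing K] {n : ℕ}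

variable (K n) in
noncomputable def symmetricAdjoinXGe (k : ℕ) : Subalgebra K (MvPolynomial (Fin n) K) :=
  Algebra.adjoin K ((symmetricSubalgebra (Fin n) K : Set _) ∪ X '' {i | k ≤ i.val})

theorem symmetricSubalgebra_le_symmetricAdjoinXGe (k : ℕ) :
    symmetricSubalgebra (Fin n) K ≤ symmetricAdjoinXGe K n k :=
  fun _ hp => Algebra.subset_adjoin (Or.inl hp)

theorem X_mem_symmetricAdjoinXGe {k : ℕ} {i : Fin n} (hi : k ≤ i.val) :
    X i ∈ symmetricAdjoinXGe K n k :=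
  Algebra.subset_adjoin (Or.inr ⟨i, hi, rfl⟩)

theorem symmetricAdjoinXGe_self : symmetricAdjoinXGe K n n = symmetricSubalgebra (Fin n) K := by
  have hempty : {i : Fin n | n ≤ i.val} = ∅ := eq_empty_of_forall_notMem fun i hi => by
    simp only [mem_ofPred_eq] at hi
    omega
  rw [symmetricAdjoinXGe, hempty, image_empty, union_empty, Algebra.adjoin_eq]

theorem symmetricAdjoinXGe_zero : symmetricAdjoinXGe K n 0 = ⊤ :=
  top_le_iff.1 <| adjoin_range_X.ge.trans <| Algebra.adjoin_le fun _ ⟨_, hi⟩ =>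
    hi ▸ X_mem_symmetricAdjoinXGe (Nat.zero_le _)

theorem symmetricAdjoinXGe_eq_restrictScalars_adjoin {k : ℕ} (hk : k < n) :
    symmetricAdjoinXGe K n k = (Algebra.adjoin (symmetricAdjoinXGe K n (k + 1))
      {(X ⟨k, hk⟩ : MvPolynomial (Fin n) K)}).restrictScalars K := by
  rw [symmetricAdjoinXGe, symmetricAdjoinXGe, ← Algebra.adjoin_union_eq_adjoin_adjoin,
    union_assoc, ← image_singleton, ← image_union]
  congr 3
  ext i
  simp only [mem_ofPred_eq, mem_union, mem_singleton_iff, Fin.ext_iff]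
  omega

theorem rename_eq_self_of_mem_symmetricAdjoinXGe {k : ℕ} {σ : Equiv.Perm (Fin n)}
    (hσ : ∀ i : Fin n, k ≤ i.val → σ i = i) {p : MvPolynomial (Fin n) K}
    (hp : p ∈ symmetricAdjoinXGe K n k) : rename σ p = p := by
  induction hp using Algebra.adjoin_induction with
  | mem _ hx =>
    rcases hx with hx | ⟨i, hi, rfl⟩
    · exact hx σ
    · rw [rename_X, hσ i hi]
  | algebraMap r => exact (rename σ).commutes r
  | add p q _ _ hp hq => rw [map_add, hp, hq]
  | mul p q _ _ hp hq => rw [map_mul, hp, hq]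

theorem linearIndependent_X_pow [IsDomain K] {k : ℕ} (hk : k < n) :
    LinearIndependent (symmetricAdjoinXGe K n (k + 1))
      fun j : Fin (k + 1) => (X ⟨k, hk⟩ : MvPolynomial (Fin n) K) ^ (j : ℕ) := by
  refine Fintype.linearIndependent_iff.2 fun g hsum => ?_
  set v : Fin (k + 1) → MvPolynomial (Fin n) K := fun i => X (Fin.castLE hk i)
  have hroots : (Matrix.vandermonde v).mulVec (fun j => (g j : MvPolynomial (Fin n) K)) = 0 := by
    funext i
    set τ := Equiv.swap (Fin.castLE hk i) ⟨k, hk⟩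
    have hτ : ∀ j : Fin n, k + 1 ≤ j.val → τ j = j :=
      fun j hj => Equiv.swap_apply_of_ne_of_ne (Fin.ne_of_val_ne (by rw [Fin.val_castLE]; omega))
        (Fin.ne_of_val_ne (show j.val ≠ k by omega))
    have hfix : ∀ j, rename τ (g j : MvPolynomial (Fin n) K) = g j :=
      fun j => rename_eq_self_of_mem_symmetricAdjoinXGe hτ (g j).2
    have hsumτ := congrArg (rename τ) hsum
    rw [map_sum, map_zero] at hsumτ
    simp only [Matrix.mulVec, dotProduct, Pi.zero_apply]
    rw [← hsumτ]
    refine Finset.sum_congr rfl fun j _ => ?_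
    rw [Subalgebra.smul_def, smul_eq_mul, map_mul, hfix j, map_pow, rename_X,
      Equiv.swap_apply_right, Matrix.vandermonde_apply, mul_comm]
  have hdet : (Matrix.vandermonde v).det ≠ 0 :=
    Matrix.det_vandermonde_ne_zero_iff.2 (X_injective.comp (Fin.castLE_injective hk))
  exact fun j => Subtype.ext (congrFun (Matrix.eq_zero_of_mulVec_eq_zero hdet hroots) j)

theorem prod_X_sub_C_X_Iic_mem_lifts {k : ℕ} (hk : k < n) :
    (∏ i ∈ Finset.Iic ⟨k, hk⟩, (Polynomial.X - Polynomial.C (X i : MvPolynomial (Fin n) K))) ∈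
      Polynomial.lifts (algebraMap (symmetricAdjoinXGe K n (k + 1)) (MvPolynomial (Fin n) K)) := by
  have hmonic : (∏ i ∈ (Finset.Iic (⟨k, hk⟩ : Fin n))ᶜ,
      (Polynomial.X - Polynomial.C (X i : MvPolynomial (Fin n) K))).Monic :=
    Polynomial.monic_prod_of_monic _ _ fun i _ => Polynomial.monic_X_sub_C _
  refine hmonic.lifts_of_mul_lifts (Subsemiring.prod_mem _ fun i hi => ?_) ?_
  · rw [Finset.mem_compl, Finset.mem_Iic, not_le] at hi
    exact (Polynomial.mem_lifts _).2
      ⟨Polynomial.X - Polynomial.C ⟨X i, X_mem_symmetricAdjoinXGe hi⟩, by simp⟩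
  · rw [Finset.prod_compl_mul_prod, Polynomial.lifts_iff_coeff_lifts]
    exact fun m => ⟨⟨_, symmetricSubalgebra_le_symmetricAdjoinXGe _
      (isSymmetric_coeff_prod_X_sub_C_X m)⟩, rfl⟩

theorem symmetricAdjoinXGe_subset_span_X_pow [Nontrivial K] {k : ℕ} (hk : k < n) :
    (symmetricAdjoinXGe K n k : Set (MvPolynomial (Fin n) K)) ⊆
      span (symmetricAdjoinXGe K n (k + 1))
        (range fun j : Fin (k + 1) => (X ⟨k, hk⟩ : MvPolynomial (Fin n) K) ^ (j : ℕ)) := by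
  obtain ⟨f, hf, hdeg, hmonic⟩ := Polynomial.lifts_and_natDegree_eq_and_monic
    (prod_X_sub_C_X_Iic_mem_lifts hk) (Polynomial.monic_prod_of_monic _ _ fun i _ =>
      Polynomial.monic_X_sub_C (X i : MvPolynomial (Fin n) K))
  have hroot : Polynomial.aeval (X ⟨k, hk⟩ : MvPolynomial (Fin n) K) f = 0 := by
    rw [← Polynomial.aeval_map_algebraMap (MvPolynomial (Fin n) K), hf,
      Polynomial.coe_aeval_eq_eval, Polynomial.eval_prod]
    exact Finset.prod_eq_zero (i := ⟨k, hk⟩) (Finset.mem_Iic.2 le_rfl) (by simp)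
  rw [Polynomial.natDegree_finsetProd_X_sub_C_eq_card, Fin.card_Iic] at hdeg
  rw [symmetricAdjoinXGe_eq_restrictScalars_adjoin hk]
  intro p hp
  have := hmonic.adjoin_singleton_le_span_pow hroot hp
  rwa [hdeg] at this

variable (n) in
def artinExponentsFrom (k : ℕ) : Set (∀ i : Fin n, Fin (i + 1)) :=
  {α | ∀ i : Fin n, i.val < k → α i = 0}

theorem artinExponentsFrom_self : artinExponentsFrom n n = {0} := by
  ext α
  simp only [artinExponentsFrom, mem_ofPred_eq, mem_singleton_iff]
  exact ⟨fun h => _root_.funext fun i => h i i.2, fun h i _ => h ▸ rfl⟩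

theorem artinExponentsFrom_zero : artinExponentsFrom n 0 = univ :=
  eq_univ_of_forall fun _ _ hi => absurd hi (Nat.not_lt_zero _)

def artinExponentsFromSuccEquiv {k : ℕ} (hk : k < n) :
    artinExponentsFrom n k ≃ artinExponentsFrom n (k + 1) × Fin (k + 1) where
  toFun α := (⟨Function.update α.1 ⟨k, hk⟩ 0, fun i hi => by
    rcases eq_or_ne i ⟨k, hk⟩ with rfl | hne
    · exact Function.update_self ..
    · rw [Function.update_of_ne hne]
      exact α.2 i (by have : i.val ≠ k := Fin.val_ne_of_ne hne; omega)⟩, α.1 ⟨k, hk⟩)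
  invFun p := ⟨Function.update p.1.1 ⟨k, hk⟩ p.2, fun i hi => by
    rw [Function.update_of_ne (Fin.ne_of_val_ne (show i.val ≠ k by omega))]
    exact p.1.2 i (by omega)⟩
  left_inv α := by simp
  right_inv p := by
    obtain ⟨⟨β, hβ⟩, j⟩ := p
    simp only [Function.update_self, Function.update_idem, Prod.mk.injEq, Subtype.mk.injEq,
      and_true]
    exact Function.update_eq_self_iff.2 (hβ _ (Nat.lt_succ_self k)).symm

variable (K) in
noncomputable def artinMonomial (α : ∀ i : Fin n, Fin (i + 1)) : MvPolynomial (Fin n) K :=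
  ∏ i, X i ^ (α i : ℕ)

theorem artinMonomial_zero : artinMonomial K (0 : ∀ i : Fin n, Fin (i + 1)) = 1 := by
  simp [artinMonomial]

theorem artinMonomial_eq_mul_X_pow (α : ∀ i : Fin n, Fin (i + 1)) (k : Fin n) :
    artinMonomial K α = artinMonomial K (Function.update α k 0) * X k ^ (α k : ℕ) := by
  classical
  have hupdate : (fun i => (X i : MvPolynomial (Fin n) K) ^ (Function.update α k 0 i : ℕ)) =
      Function.update (fun i => X i ^ (α i : ℕ)) k 1 := by
    funext i
    rw [Function.apply_update
      (fun (i : Fin n) (a : Fin (i + 1)) => (X i : MvPolynomial (Fin n) K) ^ (a : ℕ))]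
    simp
  rw [artinMonomial, artinMonomial, hupdate, Finset.prod_update_of_mem (Finset.mem_univ k),
    Finset.prod_eq_mul_prod_sdiff_singleton k _ (by simp), one_mul, mul_comm]

theorem artinMonomial_mem_symmetricAdjoinXGe {k : ℕ} {α : ∀ i : Fin n, Fin (i + 1)}
    (hα : α ∈ artinExponentsFrom n k) : artinMonomial K α ∈ symmetricAdjoinXGe K n k := by
  refine Subalgebra.prod_mem _ fun i _ => ?_
  by_cases hi : i.val < k
  · rw [hα i hi, Fin.val_zero, pow_zero]
    exact one_mem _
  · exact pow_mem (X_mem_symmetricAdjoinXGe (not_lt.1 hi)) _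

theorem linearIndepOn_artinMonomial_and_subset_span [IsDomain K] {k : ℕ} (hk : k ≤ n) :
    LinearIndepOn (symmetricSubalgebra (Fin n) K) (artinMonomial K) (artinExponentsFrom n k) ∧
      (symmetricAdjoinXGe K n k : Set (MvPolynomial (Fin n) K)) ⊆
        span (symmetricSubalgebra (Fin n) K) (artinMonomial K '' artinExponentsFrom n k) := by
  induction hk using Nat.decreasingInduction with
  | self =>
    rw [artinExponentsFrom_self, symmetricAdjoinXGe_self, image_singleton, artinMonomial_zero]
    refine ⟨LinearIndepOn.singleton' fun r hr => ?_, fun p hp => ?_⟩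
    · rw [artinMonomial_zero, Algebra.smul_def, mul_one] at hr
      exact Subtype.ext hr
    · exact mem_span_singleton.2 ⟨⟨p, hp⟩, by rw [Algebra.smul_def, mul_one]; rfl⟩
  | of_succ k hk ih =>
    obtain ⟨hli, hspan⟩ := ih
    rw [image_eq_range] at hspan ⊢
    have hfamily : (fun α : artinExponentsFrom n k => artinMonomial K α.1) =
        (fun p : artinExponentsFrom n (k + 1) × Fin (k + 1) =>
          artinMonomial K p.1.1 * X ⟨k, hk⟩ ^ (p.2 : ℕ)) ∘ artinExponentsFromSuccEquiv hk :=
      _root_.funext fun α => by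
        rw [Function.comp_apply, artinMonomial_eq_mul_X_pow α.1 ⟨k, hk⟩]
        rfl
    rw [LinearIndepOn, hfamily, linearIndependent_equiv, EquivLike.range_comp]
    refine ⟨(linearIndependent_mul_of_le (symmetricSubalgebra_le_symmetricAdjoinXGe (k + 1))
        (fun β => artinMonomial_mem_symmetricAdjoinXGe β.2) hli (linearIndependent_X_pow hk) :),
      ?_⟩
    have hprod := span_subset_span_mul (Λ := symmetricSubalgebra (Fin n) K)
      (y := fun j : Fin (k + 1) => (X ⟨k, hk⟩ : MvPolynomial (Fin n) K) ^ (j : ℕ))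
      fun a : symmetricAdjoinXGe K n (k + 1) => hspan a.2
    exact (symmetricAdjoinXGe_subset_span_X_pow hk).trans hprod

variable (K n)

theorem linearIndependent_artinMonomial [IsDomain K] :
    LinearIndependent (symmetricSubalgebra (Fin n) K) (artinMonomial (n := n) K) := by
  rw [← linearIndepOn_univ_iff, ← artinExponentsFrom_zero]
  exact (linearIndepOn_artinMonomial_and_subset_span (Nat.zero_le n)).1

theorem span_artinMonomial [IsDomain K] :
    span (symmetricSubalgebra (Fin n) K) (range (artinMonomial (n := n) K)) = ⊤ := by
  have := (linearIndepOn_artinMonomial_and_subset_span (K := K) (Nat.zero_le n)).2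
  rw [symmetricAdjoinXGe_zero, artinExponentsFrom_zero, image_univ, Algebra.coe_top] at this
  exact eq_top_iff'.2 fun p => this (mem_univ p)

noncomputable def artinBasis [IsDomain K] :
    Module.Basis (∀ i : Fin n, Fin (i + 1)) (symmetricSubalgebra (Fin n) K)
      (MvPolynomial (Fin n) K) :=
  .mk (linearIndependent_artinMonomial K n) (span_artinMonomial K n).ge

theorem card_artinExponents : Fintype.card (∀ i : Fin n, Fin (i + 1)) = n.factorial := by
  rw [Fintype.card_pi]
  simp only [Fintype.card_fin]
  rw [Fin.prod_univ_eq_prod_range (· + 1), Finset.prod_range_add_one_eq_factorial]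

end MvPolynomial

theorem mvPolynomial_free_over_symmetric_general (n : ℕ) :
    Module.Free (symmetricSubalgebra (Fin n) ℂ) (MvPolynomial (Fin n) ℂ) ∧
    Module.finrank (symmetricSubalgebra (Fin n) ℂ) (MvPolynomial (Fin n) ℂ) =
      Nat.factorial n :=
  ⟨.of_basis (artinBasis ℂ n), by
    rw [Module.finrank_eq_card_basis (artinBasis ℂ n), card_artinExponents]⟩

/-- `R = ℂ[x_1,…,x_n]` is a free module of rank `n!` over the
subalgebra `Λ` of symmetric polynomials. -/
theorem mvPolynomial_free_over_symmetric (n : ℕ) (hn : 1 ≤ n) :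
    Module.Free (symmetricSubalgebra (Fin n) ℂ) (MvPolynomial (Fin n) ℂ) ∧
    Module.finrank (symmetricSubalgebra (Fin n) ℂ) (MvPolynomial (Fin n) ℂ) =
      Nat.factorial n :=
  mvPolynomial_free_over_symmetric_general n
end

section
/- There is an isomorphism of Λ-algebras End_Λ(R) ≅ M_{n!}(Λ) between the algebra of Λ-linear endomorphisms of R = ℂ[x_1,…,x_n] (Λ the symmetric polynomials) and the n! × n! matrix algebra over Λ. -/
/-!
Write `Λ σ` for the symmetric polynomials in `MvPolynomial σ R`, `R` a domain. By induction on
`σ`, `MvPolynomial σ R` is free of rank `(card σ)!` over `Λ σ`; a basis then identifies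
`Λ`-linear endomorphisms with `n! × n!` matrices over `Λ`.

For `Option σ`, identify `MvPolynomial (Option σ) R` with `MvPolynomial σ R[X]` and let `T` be
the polynomials symmetric in the variables from `σ`. By induction over `R[X]` the whole ring is
free of rank `(card σ)!` over `T`, and `T` is free over `Λ (Option σ)` with basis
`1, x, …, x ^ card σ`, where `x = X none`. These powers span: `T` is generated over
`Λ (Option σ)` by `x` and the `e_k(σ)` (fundamental theorem), the relation
`e_{k+1}(Option σ) = e_{k+1}(σ) + x e_k(σ)` puts the `e_k(σ)` in `Λ (Option σ)[x]`, and `x` is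
a root of the monic `∏ₐ (Y - X a)` of degree `card σ + 1`, whose coefficients are symmetric.
They are independent because transposing `x` with each other variable turns a relation among
them into a Vandermonde system.
-/

set_option synthInstance.maxHeartbeats 400000

open MvPolynomial
open scoped Polynomial

namespace Module.Basis

variable {ι S S' M M' : Type*} [Semiring S] [Semiring S'] [AddCommMonoid M] [AddCommMonoid M']
  [Module S M] [Module S' M']

noncomputable def mapSemilinear (b : Basis ι S M) (f : S ≃+* S') (g : M ≃+ M')
    (hg : ∀ (s : S) (m : M), g (s • m) = f s • g m) : Basis ι S' M' :=
  letI : Module S M' := Module.compHom M' (f : S →+* S')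
  (b.map { g with map_smul' := hg }).mapCoeffs f fun _ _ => rfl

variable {R A : Type*} [CommRing R] [CommRing A] [Algebra R A] {S T : Subalgebra R A}
  {κ : Type*} [Fintype ι] [Fintype κ]

noncomputable def smulTowerOfLE (hST : S ≤ T) (b : Basis ι T A) (y : κ → A)
    (hyT : ∀ j, y j ∈ T) (hy : LinearIndependent S y)
    (hspan : ∀ t ∈ T, t ∈ Submodule.span S (Set.range y)) :
    Basis (ι × κ) S A := by
  refine .mk (v := fun p => y p.2 * b p.1) ?_ ?_
  · rw [Fintype.linearIndependent_iff]
    intro c hc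
    have hcT : ∀ i, ∑ j, (c (i, j) : A) * y j ∈ T := fun i =>
      sum_mem fun j _ => mul_mem (hST (c (i, j)).2) (hyT j)
    have hb : ∑ i, (⟨_, hcT i⟩ : T) • b i = 0 := by
      rw [← hc, Fintype.sum_prod_type]
      refine Finset.sum_congr rfl fun i _ => ?_
      simp only [Subalgebra.smul_def, Finset.sum_mul, smul_eq_mul, mul_assoc]
    rintro ⟨i, j⟩
    have hsum : ∑ j, c (i, j) • y j = 0 := by
      simpa [Subalgebra.smul_def] using
        congrArg Subtype.val (Fintype.linearIndependent_iff.1 b.linearIndependent _ hb i)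
    exact Fintype.linearIndependent_iff.1 hy _ hsum j
  · intro a _
    rw [← b.sum_repr a]
    refine sum_mem fun i _ => ?_
    rw [Subalgebra.smul_def, smul_eq_mul]
    refine Submodule.span_induction ?_ ?_ ?_ ?_ (hspan _ (b.repr a i).2)
    · rintro _ ⟨j, rfl⟩
      exact Submodule.subset_span ⟨(i, j), rfl⟩
    · simp
    · intro x x' _ _ hx hx'
      rw [add_mul]
      exact add_mem hx hx'
    · intro s x _ hx
      rw [smul_mul_assoc]
      exact Submodule.smul_mem _ _ hx

end Module.Basis

theorem Multiset.esymm_cons_succ {R : Type*} [CommSemiring R] (a : R) (s : Multiset R) (n : ℕ) :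
    (a ::ₘ s).esymm (n + 1) = s.esymm (n + 1) + a * s.esymm n := by
  simp [Multiset.esymm, Multiset.powersetCard_cons, Multiset.sum_map_mul_left]

theorem Polynomial.Monic.mem_span_pow_of_mem_adjoin {S A : Type*} [CommRing S] [CommRing A]
    [Algebra S A] {f : S[X]} (hf : f.Monic) {x : A} (hx : Polynomial.aeval x f = 0)
    {n : ℕ} (hn : f.natDegree ≤ n) {a : A} (ha : a ∈ Algebra.adjoin S {x}) :
    a ∈ Submodule.span S (Set.range fun j : Fin n => x ^ (j : ℕ)) := by
  obtain ⟨p, rfl⟩ := (Algebra.adjoin_singleton_eq_range_aeval S x).le ha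
  rcases eq_or_ne f 1 with rfl | hf1
  · have : Subsingleton A := subsingleton_of_zero_eq_one (by simpa using hx.symm)
    simp [Subsingleton.elim _ (0 : A)]
  rw [AlgHom.toRingHom_eq_coe, RingHom.coe_coe, ← Polynomial.aeval_modByMonic_eq_self_of_root hx,
    Polynomial.aeval_eq_sum_range' ((Polynomial.natDegree_modByMonic_lt p hf hf1).trans_le hn)]
  refine sum_mem fun i hi => Submodule.smul_mem _ _ (Submodule.subset_span ⟨⟨i, ?_⟩, rfl⟩)
  exact Finset.mem_range.1 hi

namespace MvPolynomial

variable {σ R : Type*} [CommRing R]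

theorem symmetricSubalgebra_eq_top [Subsingleton σ] : symmetricSubalgebra σ R = ⊤ :=
  eq_top_iff.2 fun p _ e => by
    rw [Subsingleton.elim e (Equiv.refl σ), Equiv.coe_refl, rename_id_apply]

theorem linearIndependent_X_pow_s7 [Fintype σ] [DecidableEq σ] [IsDomain R] (a : σ) :
    LinearIndependent (symmetricSubalgebra σ R)
      fun j : Fin (Fintype.card σ) => (X a : MvPolynomial σ R) ^ (j : ℕ) := by
  rw [Fintype.linearIndependent_iff]
  intro c hc j
  let ε := (Fintype.equivFin σ).symm
  have hv : (fun j => (c j : MvPolynomial σ R)) = 0 := by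
    refine Matrix.eq_zero_of_forall_index_sum_mul_pow_eq_zero (f := fun i => X (ε i))
      (X_injective.comp ε.injective) fun i => ?_
    have := congrArg (rename (Equiv.swap a (ε i))) hc
    simpa [map_sum, Subalgebra.smul_def, (c _).2 _] using this
  exact Subtype.ext (congrFun hv j)

theorem exists_monic_aeval_X_eq_zero [Fintype σ] [Nontrivial R] (a : σ) :
    ∃ f : (symmetricSubalgebra σ R)[X], f.Monic ∧ f.natDegree = Fintype.card σ ∧
      Polynomial.aeval (X a : MvPolynomial σ R) f = 0 := by
  classical
  let g : (MvPolynomial σ R)[X] := ∏ b, (Polynomial.X - Polynomial.C (X b))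
  have hlifts :
      g ∈ Polynomial.lifts (algebraMap (symmetricSubalgebra σ R) (MvPolynomial σ R)) := by
    rw [Polynomial.lifts_iff_coeff_lifts]
    intro n
    refine ⟨⟨g.coeff n, fun e => ?_⟩, rfl⟩
    have hg : g.map (rename (R := R) e).toRingHom = g := by
      simp only [g, Polynomial.map_prod, Polynomial.map_sub, Polynomial.map_X, Polynomial.map_C,
        AlgHom.toRingHom_eq_coe, RingHom.coe_coe, rename_X]
      exact Equiv.prod_comp e fun b => Polynomial.X - Polynomial.C (X b : MvPolynomial σ R)
    simpa using congrArg (Polynomial.coeff · n) hg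
  obtain ⟨f, hfg, hdeg, hmonic⟩ :=
    Polynomial.lifts_and_natDegree_eq_and_monic hlifts (Polynomial.monic_prod_X_sub_C _ _)
  refine ⟨f, hmonic, ?_, ?_⟩
  · rw [hdeg, Polynomial.natDegree_finsetProd_X_sub_C_eq_card, Finset.card_univ]
  · rw [Polynomial.aeval_def, Polynomial.eval₂_eq_eval_map, hfg, Polynomial.eval_prod]
    exact Finset.prod_eq_zero (Finset.mem_univ a) (by simp)

section Option

variable (σ R)

theorem optionEquivRight_rename_optionCongr (g : Equiv.Perm σ) (p : MvPolynomial (Option σ) R) :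
    optionEquivRight R σ (rename (Equiv.optionCongr g) p) =
      rename g (optionEquivRight R σ p) := by
  induction p using MvPolynomial.induction_on with
  | C r => simp only [rename_C, optionEquivRight_C]
  | add p q hp hq => simp only [map_add, hp, hq]
  | mul_X p o hp =>
    cases o <;> simp only [map_mul, rename_X, rename_C, hp, Equiv.optionCongr_apply, Option.map,
      optionEquivRight_X_none, optionEquivRight_X_some]

theorem optionEquivRight_rename_some (p : MvPolynomial σ R) :
    optionEquivRight R σ (rename some p) = map Polynomial.C p := by
  induction p using MvPolynomial.induction_on with
  | C r => simp only [rename_C, optionEquivRight_C, map_C]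
  | add p q hp hq => simp only [map_add, hp, hq]
  | mul_X p i hp => simp only [map_mul, rename_X, hp, optionEquivRight_X_some, map_X]

variable {σ R}

theorem IsSymmetric.optionEquivRight {p : MvPolynomial (Option σ) R} (hp : p.IsSymmetric) :
    (optionEquivRight R σ p).IsSymmetric := fun g => by
  rw [← optionEquivRight_rename_optionCongr, hp]

variable [Fintype σ]

theorem esymm_option_succ (n : ℕ) :
    esymm (Option σ) R (n + 1) =
      rename some (esymm σ R (n + 1)) + X none * rename some (esymm σ R n) := by
  have huniv : (Finset.univ : Finset (Option σ)).val.map (X (R := R)) =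
      X none ::ₘ Finset.univ.val.map (X ∘ some) := by
    simp [univ_option, Finset.insertNone, Multiset.map_map]
  rw [rename_eq_aeval, aeval_esymm_eq_multiset_esymm, aeval_esymm_eq_multiset_esymm,
    congrFun (esymm_eq_multiset_esymm (Option σ) R), huniv, Multiset.esymm_cons_succ]

theorem rename_some_esymm_mem_adjoin (n : ℕ) :
    rename some (esymm σ R n) ∈
      Algebra.adjoin (symmetricSubalgebra (Option σ) R) {X none} := by
  induction n with
  | zero => simp only [esymm_zero, map_one, one_mem]
  | succ n ih =>
    rw [eq_sub_of_add_eq (esymm_option_succ n).symm]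
    refine sub_mem ?_ (mul_mem (Algebra.subset_adjoin rfl) ih)
    exact Subalgebra.algebraMap_mem _ (⟨_, esymm_isSymmetric _ _ _⟩ : symmetricSubalgebra _ R)

theorem mem_adjoin_X_none_of_isSymmetric {a : MvPolynomial (Option σ) R}
    (ha : (optionEquivRight R σ a).IsSymmetric) :
    a ∈ Algebra.adjoin (symmetricSubalgebra (Option σ) R) {X none} := by
  obtain ⟨w, hw⟩ := esymmAlgHom_surjective (R := Polynomial R) le_rfl ⟨_, ha⟩
  have haw : a = ((optionEquivRight R σ).symm : _ →+* _)
      (aeval (fun i : Fin _ => esymm σ R[X] (i + 1)) w) := by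
    rw [← esymmAlgHom_apply, hw]
    exact ((optionEquivRight R σ).symm_apply_apply a).symm
  rw [haw, aeval_def, eval₂_comp_left]
  refine eval₂_mem (fun _ _ => ?_) fun i => ?_
  · rw [RingHom.comp_apply, algebraMap_eq, RingHom.coe_coe, optionEquivRight_symm_apply,
      aevalTower_C, ← Polynomial.aeval_map_algebraMap (symmetricSubalgebra (Option σ) R)]
    exact Polynomial.aeval_mem_adjoin_singleton _ _
  · rw [Function.comp_apply, RingHom.coe_coe, (AlgEquiv.symm_apply_eq _).2
      ((optionEquivRight_rename_some σ R _).trans (map_esymm _ _ _ _)).symm]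
    exact rename_some_esymm_mem_adjoin _

theorem nonempty_basis_symmetricSubalgebra_option [IsDomain R] {ι : Type*} [Fintype ι]
    (b : Module.Basis ι (symmetricSubalgebra σ R[X]) (MvPolynomial σ R[X])) :
    Nonempty (Module.Basis (ι × Fin (Fintype.card (Option σ)))
      (symmetricSubalgebra (Option σ) R) (MvPolynomial (Option σ) R)) := by
  classical
  let e := optionEquivRight R σ
  -- the polynomials symmetric in the variables `some i`
  let T : Subalgebra R (MvPolynomial (Option σ) R) :=
    ((symmetricSubalgebra σ R[X]).restrictScalars R).comap e.toAlgHom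
  let f : symmetricSubalgebra σ R[X] ≃+* T :=
    { toFun := fun t => ⟨e.symm t, by simp [T]⟩
      invFun := fun t => ⟨e t, t.2⟩
      left_inv := fun t => by simp
      right_inv := fun t => by simp
      map_mul' := fun s t => by ext; simp
      map_add' := fun s t => by ext; simp }
  have hST : symmetricSubalgebra (Option σ) R ≤ T := fun _ hp => hp.optionEquivRight
  obtain ⟨g, hmonic, hdeg, hroot⟩ := exists_monic_aeval_X_eq_zero (R := R) (none : Option σ)
  refine ⟨(b.mapSemilinear f e.symm.toAddEquiv fun t p => ?_).smulTowerOfLE hST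
    (fun j => X none ^ (j : ℕ)) (fun j => ?_) (linearIndependent_X_pow_s7 none) fun t ht =>
      hmonic.mem_span_pow_of_mem_adjoin hroot hdeg.le (mem_adjoin_X_none_of_isSymmetric ht)⟩
  · simp [Subalgebra.smul_def, f]
  · simpa [T, e] using pow_mem ((symmetricSubalgebra σ _).algebraMap_mem Polynomial.X) _

end Option

universe u v in
open Nat in
theorem nonempty_basis_symmetricSubalgebra (σ : Type u) [Fintype σ] (R : Type v) [CommRing R]
    [IsDomain R] :
    Nonempty
      (Module.Basis (Fin (Fintype.card σ)!) (symmetricSubalgebra σ R) (MvPolynomial σ R)) := by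
  revert R
  refine Fintype.induction_empty_option
    (P := fun σ _ => ∀ (R : Type v) [CommRing R] [IsDomain R], Nonempty
      (Module.Basis (Fin (Fintype.card σ)!) (symmetricSubalgebra σ R) (MvPolynomial σ R)))
    ?_ ?_ ?_ σ
  · intro α β _ e ih R _ _
    obtain ⟨b⟩ := ih R
    refine ⟨(b.mapSemilinear (renameSymmetricSubalgebra e).toRingEquiv
      (renameEquiv R e).toAddEquiv fun s p => ?_).reindex (finCongr ?_)⟩
    · simp [Subalgebra.smul_def]
    · rw [Fintype.ofEquiv_card]
  · intro R _ _
    let f : MvPolynomial PEmpty R ≃+* symmetricSubalgebra PEmpty R :=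
      (Subalgebra.topEquiv.symm.trans
        (Subalgebra.equivOfEq _ _ symmetricSubalgebra_eq_top.symm)).toRingEquiv
    exact ⟨((Module.Basis.singleton (Fin 1) _).mapSemilinear f (AddEquiv.refl _)
      fun s p => by simp [Subalgebra.smul_def, f]).reindex (finCongr (by simp))⟩
  · intro α _ ih R _ _
    obtain ⟨b'⟩ := nonempty_basis_symmetricSubalgebra_option (ih R[X]).some
    exact ⟨b'.reindex (Fintype.equivFinOfCardEq (by simp [factorial_succ, mul_comm]))⟩

end MvPolynomial

theorem end_of_polynomials_over_symmetric_iso_matrix_general (n : ℕ) :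
    Nonempty
      (Module.End (symmetricSubalgebra (Fin n) ℂ) (MvPolynomial (Fin n) ℂ)
          ≃ₐ[symmetricSubalgebra (Fin n) ℂ]
        Matrix (Fin (Nat.factorial n)) (Fin (Nat.factorial n))
          (symmetricSubalgebra (Fin n) ℂ)) := by
  obtain ⟨b⟩ := nonempty_basis_symmetricSubalgebra (Fin n) ℂ
  exact ⟨algEquivMatrix (b.reindex (finCongr (by rw [Fintype.card_fin])))⟩

/-- `End_Λ(R) ≅ M_{n!}(Λ)` as `Λ`-algebras, where `R = ℂ[x_1,…,x_n]`
and `Λ` is the subalgebra of symmetric polynomials. -/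
theorem end_of_polynomials_over_symmetric_iso_matrix (n : ℕ) (hn : 1 ≤ n) :
    Nonempty
      (Module.End (symmetricSubalgebra (Fin n) ℂ) (MvPolynomial (Fin n) ℂ)
          ≃ₐ[symmetricSubalgebra (Fin n) ℂ]
        Matrix (Fin (Nat.factorial n)) (Fin (Nat.factorial n))
          (symmetricSubalgebra (Fin n) ℂ)) :=
  end_of_polynomials_over_symmetric_iso_matrix_general n
end

section
/- The Demazure operators satisfy the nil Coxeter relations as endomorphisms of R = ℂ[x_1,…,x_n]: (a) δ_i ∘ δ_i = 0 for all 1 ≤ i ≤ n−1; (b) δ_i ∘ δ_{i+1} ∘ δ_i = δ_{i+1} ∘ δ_i ∘ δ_{i+1} for all 1 ≤ i ≤ n−2; (c) δ_i ∘ δ_j = δ_j ∘ δ_i whenever |i − j| ≥ 2. -/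
/-!
Work in the fraction field `L` of `R`, where `δ_{ab} φ = (s_{ab} φ - φ) / (x_a - x_b)` makes
sense for every pair `a, b`, and the relation defining `δ_i` says that `δ_i` is the restriction
of `δ_{i,i+1}`. These operators are equivariant, `e (δ_{ab} φ) = δ_{e a, e b} (e φ)`.
Hence `s_{ab}` fixes `δ_{ab} φ`, which gives `δ_{ab}² = 0`; for disjoint pairs each swap commutes
with the other operator, which gives `δ_{ab} δ_{cd} = δ_{cd} δ_{ab}`. Unwinding equivariance
twice, `δ_{ab} δ_{bc} δ_{ab} φ` is the alternating sum of the six `w φ`, `w ∈ S_{a,b,c}`, over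
`(x_a - x_b)(x_b - x_c)(x_a - x_c)`; relabelling `a ↔ c` changes the sign of this expression and
of each `δ`, which is the braid relation.
-/

open MvPolynomial Equiv

section DivDiff

variable {σ L : Type*} [DecidableEq σ] [Field L] [MulSemiringAction (Perm σ) L]

noncomputable def divDiff (x : σ → L) (a b : σ) (φ : L) : L :=
  (swap a b • φ - φ) / (x a - x b)

variable {x : σ → L}

theorem divDiff_comm (a b : σ) (φ : L) : divDiff x b a φ = -divDiff x a b φ := by
  rw [divDiff, divDiff, swap_comm, ← neg_sub (x a), div_neg]

theorem divDiff_neg (a b : σ) (φ : L) : divDiff x a b (-φ) = -divDiff x a b φ := by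
  rw [divDiff, divDiff, smul_neg, neg_sub_neg, ← neg_sub, neg_div]

theorem smul_divDiff (hx : ∀ (e : Perm σ) a, e • x a = x (e a)) (e : Perm σ) (a b : σ)
    (φ : L) :
    e • divDiff x a b φ = divDiff x (e a) (e b) (e • φ) := by
  rw [divDiff, divDiff, smul_div₀', smul_sub, smul_sub, hx, hx, ← mul_smul, ← mul_smul,
    swap_apply_apply, inv_mul_cancel_right]

theorem swap_smul_divDiff (hx : ∀ (e : Perm σ) a, e • x a = x (e a)) (a b : σ) (φ : L) :
    swap a b • divDiff x a b φ = divDiff x a b φ := by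
  rw [smul_divDiff hx, swap_apply_left, swap_apply_right, divDiff_comm, divDiff, divDiff,
    ← mul_smul, swap_mul_self, one_smul, ← neg_div, neg_sub]

theorem divDiff_divDiff_self (hx : ∀ (e : Perm σ) a, e • x a = x (e a)) (a b : σ) (φ : L) :
    divDiff x a b (divDiff x a b φ) = 0 := by
  rw [divDiff, swap_smul_divDiff hx, sub_self, zero_div]

theorem divDiff_divDiff_comm (hx : ∀ (e : Perm σ) a, e • x a = x (e a)) {a b c d : σ}
    (hac : a ≠ c) (had : a ≠ d) (hbc : b ≠ c) (hbd : b ≠ d) (φ : L) :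
    divDiff x a b (divDiff x c d φ) = divDiff x c d (divDiff x a b φ) := by
  have hs : swap a b • divDiff x c d φ = divDiff x c d (swap a b • φ) := by
    rw [smul_divDiff hx, swap_apply_of_ne_of_ne hac.symm hbc.symm,
      swap_apply_of_ne_of_ne had.symm hbd.symm]
  have ht : swap c d • divDiff x a b φ = divDiff x a b (swap c d • φ) := by
    rw [smul_divDiff hx, swap_apply_of_ne_of_ne hac had, swap_apply_of_ne_of_ne hbc hbd]
  have hst : swap a b * swap c d = swap c d * swap a b := by
    conv_lhs => rw [← swap_apply_of_ne_of_ne hac had, ← swap_apply_of_ne_of_ne hbc hbd,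
      swap_apply_apply, inv_mul_cancel_right]
  rw [divDiff, hs]
  conv_rhs => rw [divDiff, ht]
  simp only [divDiff, ← mul_smul, hst]
  ring

theorem divDiff_divDiff_divDiff (hx : ∀ (e : Perm σ) a, e • x a = x (e a))
    (hinj : Function.Injective x) {a b c : σ} (hab : a ≠ b) (hbc : b ≠ c) (hac : a ≠ c) (φ : L) :
    divDiff x a b (divDiff x b c (divDiff x a b φ)) =
      (swap a b • φ + swap b c • φ + swap a c • φ - φ - (swap a b * swap b c) • φ -
        (swap b c * swap a b) • φ) / ((x a - x b) * (x b - x c) * (x a - x c)) := by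
  set ψ := divDiff x a b φ with hψ
  have hsψ : swap a b • ψ = ψ := swap_smul_divDiff hx a b φ
  have hξ : divDiff x b c ψ = (divDiff x a c (swap b c • φ) - ψ) / (x b - x c) := by
    rw [divDiff, smul_divDiff hx, swap_apply_of_ne_of_ne hab hac, swap_apply_left]
  have hsξ :
      swap a b • divDiff x b c ψ = (divDiff x c b (swap a c • φ) - ψ) / (x a - x c) := by
    rw [smul_divDiff hx, swap_apply_right, swap_apply_of_ne_of_ne hac.symm hbc.symm, hsψ,
      divDiff, smul_divDiff hx, swap_apply_left, swap_apply_of_ne_of_ne hab.symm hbc]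
  have hu : swap a c = swap b c * swap a b * swap b c := by
    rw [swap_mul_swap_mul_swap hab hac, swap_comm]
  have hut : swap a c * swap b c = swap b c * swap a b := by
    rw [hu, mul_assoc, swap_mul_self, mul_one]
  have htu : swap b c * swap a c = swap a b * swap b c := by
    rw [hu, ← mul_assoc, ← mul_assoc, swap_mul_self, one_mul]
  have hxab : x a - x b ≠ 0 := sub_ne_zero.mpr (hinj.ne hab)
  have hxbc : x b - x c ≠ 0 := sub_ne_zero.mpr (hinj.ne hbc)
  have hxac : x a - x c ≠ 0 := sub_ne_zero.mpr (hinj.ne hac)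
  have hxcb : x c - x b ≠ 0 := sub_ne_zero.mpr (hinj.ne hbc.symm)
  rw [divDiff, hsξ, hξ, hψ]
  simp only [divDiff, ← mul_smul, hut, swap_comm c b, htu]
  field_simp
  ring

theorem divDiff_braid (hx : ∀ (e : Perm σ) a, e • x a = x (e a))
    (hinj : Function.Injective x) {a b c : σ} (hab : a ≠ b) (hbc : b ≠ c) (hac : a ≠ c) (φ : L) :
    divDiff x a b (divDiff x b c (divDiff x a b φ)) =
      divDiff x b c (divDiff x a b (divDiff x b c φ)) := by
  have hrev : divDiff x b c (divDiff x a b (divDiff x b c φ)) =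
      -divDiff x c b (divDiff x b a (divDiff x c b φ)) := by
    rw [divDiff_comm c b, divDiff_comm b a, divDiff_neg, divDiff_comm c b, divDiff_neg,
      divDiff_neg, neg_neg]
  rw [hrev, divDiff_divDiff_divDiff hx hinj hab hbc hac,
    divDiff_divDiff_divDiff hx hinj hbc.symm hab.symm hac.symm, swap_comm c b, swap_comm b a,
    swap_comm c a]
  have hΔ : (x c - x b) * (x b - x a) * (x c - x a) =
      -((x a - x b) * (x b - x c) * (x a - x c)) := by
    ring
  rw [hΔ, div_neg, neg_neg]
  congr 1
  abel

end DivDiff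

namespace MvPolynomial

variable {σ R : Type*} [CommRing R]

noncomputable def renamePermHom : Perm σ →* (MvPolynomial σ R ≃+* MvPolynomial σ R) where
  toFun e := (renameEquiv R e).toRingEquiv
  map_one' := RingEquiv.ext fun p => rename_id_apply p
  map_mul' e f := RingEquiv.ext fun p => (rename_rename f e p).symm

variable [IsDomain R]

local notation "𝕃" => FractionRing (MvPolynomial σ R)

noncomputable instance : MulSemiringAction (Perm σ) 𝕃 :=
  MulSemiringAction.compHom 𝕃
    ((IsFractionRing.ringEquivOfRingEquivHom (MvPolynomial σ R) 𝕃).comp renamePermHom)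

theorem perm_smul_algebraMap (e : Perm σ) (p : MvPolynomial σ R) :
    e • algebraMap (MvPolynomial σ R) 𝕃 p =
      algebraMap (MvPolynomial σ R) 𝕃 (rename e p) :=
  IsFractionRing.ringEquivOfRingEquiv_algebraMap _ p

theorem perm_smul_algebraMap_X (e : Perm σ) (a : σ) :
    e • algebraMap (MvPolynomial σ R) 𝕃 (X a) =
      algebraMap (MvPolynomial σ R) 𝕃 (X (e a)) := by
  rw [perm_smul_algebraMap, rename_X]

theorem algebraMap_comp_X_injective :
    Function.Injective (algebraMap (MvPolynomial σ R) 𝕃 ∘ X) :=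
  (IsFractionRing.injective _ _).comp (X_injective (R := R))

theorem algebraMap_eq_divDiff [DecidableEq σ] {a b : σ} (hab : a ≠ b)
    {f g : MvPolynomial σ R} (h : g * (X a - X b) = rename (swap a b) f - f) :
    algebraMap (MvPolynomial σ R) 𝕃 g =
      divDiff (algebraMap (MvPolynomial σ R) 𝕃 ∘ X) a b (algebraMap (MvPolynomial σ R) 𝕃 f) := by
  rw [divDiff, eq_div_iff (sub_ne_zero.mpr (algebraMap_comp_X_injective.ne hab)),
    perm_smul_algebraMap]
  simp only [Function.comp_apply, ← map_sub, ← map_mul, h]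

end MvPolynomial

/-- the Demazure operators satisfy the nil Coxeter relations:
`δ_i² = 0`, `δ_i δ_{i+1} δ_i = δ_{i+1} δ_i δ_{i+1}`, and `δ_i δ_j = δ_j δ_i` for
`|i − j| ≥ 2`.  (Here `R = ℂ[x_1,…,x_{n+1}]` and, for `i : Fin n`, `δ_i = D i` is
the map determined by `δ_i(f)·(x_i − x_{i+1}) = s_i•f − f` with
`s_i = Equiv.swap i.castSucc i.succ`.) -/
theorem demazure_nil_coxeter_relations (n : ℕ)
    (D : Fin n → (MvPolynomial (Fin (n + 1)) ℂ → MvPolynomial (Fin (n + 1)) ℂ))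
    (hD : ∀ (i : Fin n) (f : MvPolynomial (Fin (n + 1)) ℂ),
      D i f * (X i.castSucc - X i.succ) =
        rename (⇑(Equiv.swap i.castSucc i.succ)) f - f) :
    -- (a) δ_i ∘ δ_i = 0
    (∀ (i : Fin n) (f : MvPolynomial (Fin (n + 1)) ℂ), D i (D i f) = 0) ∧
    -- (b) δ_i ∘ δ_{i+1} ∘ δ_i = δ_{i+1} ∘ δ_i ∘ δ_{i+1}
    (∀ (i j : Fin n), (j : ℕ) = (i : ℕ) + 1 →
      ∀ f : MvPolynomial (Fin (n + 1)) ℂ,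
        D i (D j (D i f)) = D j (D i (D j f))) ∧
    -- (c) δ_i ∘ δ_j = δ_j ∘ δ_i whenever |i − j| ≥ 2
    (∀ (i j : Fin n), (i : ℕ) + 2 ≤ (j : ℕ) ∨ (j : ℕ) + 2 ≤ (i : ℕ) →
      ∀ f : MvPolynomial (Fin (n + 1)) ℂ, D i (D j f) = D j (D i f)) := by
  have hx := perm_smul_algebraMap_X (σ := Fin (n + 1)) (R := ℂ)
  have hinj := algebraMap_comp_X_injective (σ := Fin (n + 1)) (R := ℂ)
  let ι :=
    algebraMap (MvPolynomial (Fin (n + 1)) ℂ) (FractionRing (MvPolynomial (Fin (n + 1)) ℂ))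
  have hD' : ∀ i f, ι (D i f) = divDiff (ι ∘ X) i.castSucc i.succ (ι f) :=
    fun i f => algebraMap_eq_divDiff Fin.castSucc_lt_succ.ne (hD i f)
  have inj : Function.Injective ι := IsFractionRing.injective _ _
  refine ⟨fun i f => inj ?_, fun i j hij f => inj ?_, fun i j hij f => inj ?_⟩
  · rw [hD', hD', map_zero]
    exact divDiff_divDiff_self hx _ _ _
  · have hj : j.castSucc = i.succ := Fin.ext (by simp [hij])
    simp only [hD', hj]
    refine divDiff_braid hx hinj Fin.castSucc_lt_succ.ne ?_ ?_ _ <;> simp [Fin.ext_iff] <;> omega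
  · simp only [hD']
    refine divDiff_divDiff_comm hx ?_ ?_ ?_ ?_ _ <;> simp [Fin.ext_iff] <;> omega
end

section
/- For every permutation w ∈ S_n, the composite of Demazure operators δ_{i_1} ∘ δ_{i_2} ∘ … ∘ δ_{i_k} associated to a reduced expression w = s_{i_1} s_{i_2} ⋯ s_{i_k} (a product of adjacent transpositions of minimal length k = ℓ(w)) is independent of the choice of reduced expression; hence there is a well-defined operator δ_w ∈ End_Λ(R) for each w ∈ S_n. -/
/-!
The Demazure operators satisfy the commutation and braid relations of the `s_i`: multiplied by
the product of the differences `X a - X b` of the variables involved, both sides of a relation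
become the same signed sum of permuted copies of `f`, and `MvPolynomial` over a domain has no zero
divisors. The theorem is then Matsumoto's: a map from the adjacent transpositions to a monoid that
satisfies these relations is constant on the reduced words of a permutation. With length the
number of inversions, two reduced words of `w` beginning with `i ≠ j` make `s_i` and `s_j` left
descents of `w`, so `w` also has a reduced word beginning with the alternating word `i j i ⋯` of
length `m(i, j)`; induction on the length joins each of the two words to one of the two braid
words, which differ by a single relation.
-/

open MvPolynomial
open Equiv

namespace Equiv.Perm

variable {N : ℕ}

def inversions (w : Perm (Fin N)) : Finset (Fin N × Fin N) :=
  Finset.univ.filter fun p => p.1 < p.2 ∧ w p.2 < w p.1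

def numInversions (w : Perm (Fin N)) : ℕ := (inversions w).card

@[simp]
lemma mem_inversions {w : Perm (Fin N)} {p : Fin N × Fin N} :
    p ∈ inversions w ↔ p.1 < p.2 ∧ w p.2 < w p.1 := by
  simp [inversions]

@[simp]
lemma numInversions_one : numInversions (1 : Perm (Fin N)) = 0 :=
  Finset.card_eq_zero.2 <| Finset.eq_empty_of_forall_notMem fun _ hp =>
    lt_asymm (mem_inversions.1 hp).1 (mem_inversions.1 hp).2

end Equiv.Perm

open Equiv.Perm

variable {n : ℕ}

def adjSwap (i : Fin n) : Perm (Fin (n + 1)) := swap i.castSucc i.succ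

-- `ℓ(s_i w) < ℓ(w)`, see `numInversions_adjSwap_mul_add_one`.
def IsLeftDescent (w : Perm (Fin (n + 1))) (i : Fin n) : Prop := w⁻¹ i.succ < w⁻¹ i.castSucc

@[simp]
lemma adjSwap_mul_adjSwap_mul (i : Fin n) (w : Perm (Fin (n + 1))) :
    adjSwap i * (adjSwap i * w) = w :=
  swap_mul_self_mul _ _ _

lemma adjSwap_apply_of_ne {i : Fin n} {x : Fin (n + 1)} (h₁ : (x : ℕ) ≠ i) (h₂ : (x : ℕ) ≠ i + 1) :
    adjSwap i x = x :=
  swap_apply_of_ne_of_ne (by simpa [Fin.ext_iff] using h₁) (by simpa [Fin.ext_iff] using h₂)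

@[simp]
lemma adjSwap_apply_castSucc (i : Fin n) : adjSwap i i.castSucc = i.succ := swap_apply_left _ _

@[simp]
lemma adjSwap_apply_succ (i : Fin n) : adjSwap i i.succ = i.castSucc := swap_apply_right _ _

lemma inv_adjSwap_mul_apply (i : Fin n) (w : Perm (Fin (n + 1))) (x : Fin (n + 1)) :
    (adjSwap i * w)⁻¹ x = w⁻¹ (adjSwap i x) := by
  rw [mul_inv_rev, adjSwap, swap_inv, mul_apply]

lemma adjSwap_lt_adjSwap_iff {i : Fin n} {x y : Fin (n + 1)} :
    adjSwap i x < adjSwap i y ↔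
      x < y ∧ ¬(x = i.castSucc ∧ y = i.succ) ∨ x = i.succ ∧ y = i.castSucc := by
  simp only [adjSwap, swap_apply_def]
  split_ifs <;> simp only [Fin.lt_def, Fin.ext_iff, Fin.val_castSucc, Fin.val_succ] at * <;> omega

lemma inversions_adjSwap_mul_of_isLeftDescent {w : Perm (Fin (n + 1))} {i : Fin n}
    (h : IsLeftDescent w i) :
    inversions (adjSwap i * w) = (inversions w).erase (w⁻¹ i.succ, w⁻¹ i.castSucc) := by
  ext ⟨a, b⟩
  simp only [mem_inversions, Finset.mem_erase, mul_apply, adjSwap_lt_adjSwap_iff, ne_eq,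
    Prod.mk.injEq, eq_inv_iff_eq]
  constructor
  · rintro ⟨hab, ⟨hw, hne⟩ | ⟨hb, ha⟩⟩
    · exact ⟨fun h' => hne ⟨h'.2, h'.1⟩, hab, hw⟩
    · rw [← eq_inv_iff_eq] at ha hb
      exact absurd (ha ▸ hb ▸ h) hab.not_gt
  · rintro ⟨hne, hab, hw⟩
    exact ⟨hab, Or.inl ⟨hw, fun h' => hne ⟨h'.2, h'.1⟩⟩⟩

lemma inversions_adjSwap_mul_of_not_isLeftDescent {w : Perm (Fin (n + 1))} {i : Fin n}
    (h : ¬IsLeftDescent w i) :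
    inversions (adjSwap i * w) = insert (w⁻¹ i.castSucc, w⁻¹ i.succ) (inversions w) := by
  have hlt : w⁻¹ i.castSucc < w⁻¹ i.succ :=
    (not_lt.1 h).lt_of_ne fun he => i.castSucc_lt_succ.ne (w⁻¹.injective he)
  ext ⟨a, b⟩
  simp only [mem_inversions, Finset.mem_insert, mul_apply, adjSwap_lt_adjSwap_iff,
    Prod.mk.injEq, eq_inv_iff_eq]
  constructor
  · rintro ⟨hab, ⟨hw, -⟩ | ⟨hb, ha⟩⟩
    · exact Or.inr ⟨hab, hw⟩
    · exact Or.inl ⟨ha, hb⟩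
  · rintro (⟨ha, hb⟩ | ⟨hab, hw⟩)
    · refine ⟨?_, Or.inr ⟨hb, ha⟩⟩
      rw [← eq_inv_iff_eq] at ha hb
      exact ha ▸ hb ▸ hlt
    · refine ⟨hab, Or.inl ⟨hw, fun h' => ?_⟩⟩
      rw [← eq_inv_iff_eq, ← eq_inv_iff_eq] at h'
      rw [h'.1, h'.2] at hab
      exact hab.not_gt hlt

lemma numInversions_adjSwap_mul_add_one {w : Perm (Fin (n + 1))} {i : Fin n}
    (h : IsLeftDescent w i) : numInversions (adjSwap i * w) + 1 = numInversions w := by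
  rw [numInversions, inversions_adjSwap_mul_of_isLeftDescent h]
  exact Finset.card_erase_add_one (mem_inversions.2 ⟨h, by simp⟩)

lemma numInversions_adjSwap_mul_of_not_isLeftDescent {w : Perm (Fin (n + 1))} {i : Fin n}
    (h : ¬IsLeftDescent w i) : numInversions (adjSwap i * w) = numInversions w + 1 := by
  rw [numInversions, inversions_adjSwap_mul_of_not_isLeftDescent h]
  refine Finset.card_insert_of_notMem fun hm => ?_
  exact i.castSucc_lt_succ.not_gt (by simpa using (mem_inversions.1 hm).2)

lemma exists_isLeftDescent_of_ne_one {w : Perm (Fin (n + 1))} (hw : w ≠ 1) :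
    ∃ i, IsLeftDescent w i := by
  by_contra! h
  have hmono : StrictMono ⇑w⁻¹ := Fin.strictMono_iff_lt_succ.2 fun i =>
    (not_lt.1 (h i)).lt_of_ne fun he => i.castSucc_lt_succ.ne (w⁻¹.injective he)
  exact hw (inv_eq_one.1 (Equiv.ext fun x => congrFun hmono.eq_id x))

def wordProd (l : List (Fin n)) : Perm (Fin (n + 1)) := (l.map adjSwap).prod

@[simp]
lemma wordProd_nil : wordProd ([] : List (Fin n)) = 1 := rfl

@[simp]
lemma wordProd_cons (i : Fin n) (l : List (Fin n)) :
    wordProd (i :: l) = adjSwap i * wordProd l := List.prod_cons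

@[simp]
lemma wordProd_append (l l' : List (Fin n)) : wordProd (l ++ l') = wordProd l * wordProd l' := by
  simp [wordProd]

lemma numInversions_wordProd_le (l : List (Fin n)) : numInversions (wordProd l) ≤ l.length := by
  induction l with
  | nil => simp
  | cons i l ih =>
    by_cases h : IsLeftDescent (wordProd l) i
    · have := numInversions_adjSwap_mul_add_one h
      simp only [wordProd_cons, List.length_cons]
      omega
    · have := numInversions_adjSwap_mul_of_not_isLeftDescent h
      simp only [wordProd_cons, List.length_cons]
      omega

def IsReducedWord (l : List (Fin n)) : Prop := l.length = numInversions (wordProd l)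

lemma IsReducedWord.length_eq {l l' : List (Fin n)} (h : IsReducedWord l) (h' : IsReducedWord l')
    (he : wordProd l = wordProd l') : l.length = l'.length := by
  rw [h, h', he]

lemma IsReducedWord.of_wordProd_eq {l l' : List (Fin n)} (h : IsReducedWord l)
    (he : wordProd l' = wordProd l) (hlen : l'.length = l.length) : IsReducedWord l' := by
  rw [IsReducedWord, he, hlen, h]

lemma isReducedWord_cons_iff {i : Fin n} {l : List (Fin n)} :
    IsReducedWord (i :: l) ↔ IsReducedWord l ∧ IsLeftDescent (wordProd (i :: l)) i := by
  have hle := numInversions_wordProd_le l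
  by_cases h : IsLeftDescent (wordProd (i :: l)) i
  · have := numInversions_adjSwap_mul_add_one h
    simp only [wordProd_cons, adjSwap_mul_adjSwap_mul] at this h ⊢
    simp only [IsReducedWord, wordProd_cons, List.length_cons, h, and_true]
    omega
  · have := numInversions_adjSwap_mul_of_not_isLeftDescent h
    simp only [wordProd_cons, adjSwap_mul_adjSwap_mul] at this h ⊢
    simp only [IsReducedWord, wordProd_cons, List.length_cons, h, and_false, iff_false]
    omega

lemma exists_isReducedWord (w : Perm (Fin (n + 1))) : ∃ l, IsReducedWord l ∧ wordProd l = w := by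
  induction hk : numInversions w using Nat.strong_induction_on generalizing w with
  | _ k ih =>
    rcases eq_or_ne w 1 with rfl | hw
    · exact ⟨[], by simp [IsReducedWord], rfl⟩
    obtain ⟨i, hi⟩ := exists_isLeftDescent_of_ne_one hw
    have hlt := numInversions_adjSwap_mul_add_one hi
    obtain ⟨l, hl, hlw⟩ := ih _ (by omega) (adjSwap i * w) rfl
    refine ⟨i :: l, isReducedWord_cons_iff.2 ⟨hl, ?_⟩, ?_⟩ <;> simp [hlw, hi]

lemma isReducedWord_iff_length_le {l : List (Fin n)} :
    IsReducedWord l ↔ ∀ l', wordProd l' = wordProd l → l.length ≤ l'.length := by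
  refine ⟨fun h l' he => h ▸ he ▸ numInversions_wordProd_le l', fun h => ?_⟩
  obtain ⟨l₀, hl₀, he⟩ := exists_isReducedWord (wordProd l)
  refine le_antisymm ?_ (numInversions_wordProd_le l)
  rw [← he, ← hl₀]
  exact h l₀ he

lemma swap_braid {α : Type*} [DecidableEq α] {a b c : α} (hab : a ≠ b)
    (hbc : b ≠ c) (hac : a ≠ c) :
    swap a b * swap b c * swap a b = swap b c * swap a b * swap b c := by
  rw [swap_mul_swap_mul_swap hab hac, swap_comm a b, swap_comm b c,
    swap_mul_swap_mul_swap hbc.symm hac.symm, swap_comm]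

lemma adjSwap_mul_comm {i j : Fin n} (h : (i : ℕ) + 1 < j) :
    adjSwap i * adjSwap j = adjSwap j * adjSwap i :=
  (disjoint_swap_swap (by simp [Fin.ext_iff]; omega)).commute.eq

lemma adjSwap_braid {i j : Fin n} (h : (j : ℕ) = i + 1) :
    adjSwap i * adjSwap j * adjSwap i = adjSwap j * adjSwap i * adjSwap j := by
  have hji : j.castSucc = i.succ := Fin.ext (by simp [h])
  simp only [adjSwap, hji]
  exact swap_braid (by simp [Fin.ext_iff]) (by simp [Fin.ext_iff]; omega)
    (by simp [Fin.ext_iff]; omega)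

lemma IsLeftDescent.adjSwap_mul {w : Perm (Fin (n + 1))} {i j : Fin n} (hi : IsLeftDescent w i)
    (hj : IsLeftDescent w j) (hij : i ≠ j) : IsLeftDescent (adjSwap i * w) j := by
  have hij' : (i : ℕ) ≠ j := Fin.val_ne_of_ne hij
  unfold IsLeftDescent at *
  rw [inv_adjSwap_mul_apply, inv_adjSwap_mul_apply]
  obtain h | h | h : (j : ℕ) = i + 1 ∨ (i : ℕ) = j + 1 ∨ ((i : ℕ) + 1 < j ∨ (j : ℕ) + 1 < i) := by
    omega
  · have hji : j.castSucc = i.succ := Fin.ext (by simp [h])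
    rw [adjSwap_apply_of_ne (by simp; omega) (by simp; omega), hji, adjSwap_apply_succ]
    exact (hji ▸ hj).trans hi
  · have hij : i.castSucc = j.succ := Fin.ext (by simp [h])
    rw [adjSwap_apply_of_ne (x := j.castSucc) (by simp; omega) (by simp; omega), ← hij,
      adjSwap_apply_castSucc]
    exact hi.trans (hij ▸ hj)
  · rwa [adjSwap_apply_of_ne (by simp; omega) (by simp; omega),
      adjSwap_apply_of_ne (by simp; omega) (by simp; omega)]

lemma IsLeftDescent.adjSwap_mul_adjSwap_mul {w : Perm (Fin (n + 1))} {i j : Fin n}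
    (hj : IsLeftDescent w j) (hadj : (i : ℕ) + 1 = j ∨ (j : ℕ) + 1 = i) :
    IsLeftDescent (adjSwap j * (adjSwap i * w)) i := by
  unfold IsLeftDescent at *
  simp only [inv_adjSwap_mul_apply]
  rcases hadj with h | h
  · have hji : j.castSucc = i.succ := Fin.ext (by simp [h])
    rwa [← hji, adjSwap_apply_castSucc, adjSwap_apply_of_ne (x := j.succ) (by simp; omega)
      (by simp; omega), adjSwap_apply_of_ne (x := i.castSucc) (by simp; omega) (by simp; omega),
      adjSwap_apply_castSucc, ← hji]
  · have hij : i.castSucc = j.succ := Fin.ext (by simp [h])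
    rwa [adjSwap_apply_of_ne (x := i.succ) (by simp; omega) (by simp; omega),
      adjSwap_apply_succ, hij, adjSwap_apply_succ,
      adjSwap_apply_of_ne (x := j.castSucc) (by simp; omega) (by simp; omega)]

def IsReducedPrefix (p : List (Fin n)) (w : Perm (Fin (n + 1))) : Prop :=
  ∃ u, IsReducedWord (p ++ u) ∧ wordProd (p ++ u) = w

lemma isReducedPrefix_nil (w : Perm (Fin (n + 1))) : IsReducedPrefix [] w :=
  exists_isReducedWord w

lemma IsReducedPrefix.cons {p : List (Fin n)} {w : Perm (Fin (n + 1))} {i : Fin n}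
    (hp : IsReducedPrefix p (adjSwap i * w)) (hi : IsLeftDescent w i) :
    IsReducedPrefix (i :: p) w := by
  obtain ⟨u, hu, hpu⟩ := hp
  have hw : wordProd (i :: (p ++ u)) = w := by rw [wordProd_cons, hpu, adjSwap_mul_adjSwap_mul]
  exact ⟨u, isReducedWord_cons_iff.2 ⟨hu, hw ▸ hi⟩, hw⟩

/-- The two sides of the braid relation between `s_i` and `s_j` (for `i ≠ j`) are
`braidWord i j` and `braidWord j i`. -/
def braidWord (i j : Fin n) : List (Fin n) :=
  if (i : ℕ) + 1 = j ∨ (j : ℕ) + 1 = i then [i, j, i] else [i, j]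

lemma exists_braidWord_eq_cons (i j : Fin n) : ∃ p, braidWord i j = i :: p := by
  unfold braidWord
  split_ifs <;> exact ⟨_, rfl⟩

lemma length_braidWord_comm (i j : Fin n) : (braidWord i j).length = (braidWord j i).length := by
  simp only [braidWord, or_comm]
  split_ifs <;> rfl

lemma IsLeftDescent.isReducedPrefix_braidWord {w : Perm (Fin (n + 1))} {i j : Fin n}
    (hi : IsLeftDescent w i) (hj : IsLeftDescent w j) (hij : i ≠ j) :
    IsReducedPrefix (braidWord i j) w := by
  unfold braidWord
  split_ifs with hadj
  · exact (((isReducedPrefix_nil _).cons (hj.adjSwap_mul_adjSwap_mul hadj)).cons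
      (hi.adjSwap_mul hj hij)).cons hi
  · exact ((isReducedPrefix_nil _).cons (hi.adjSwap_mul hj hij)).cons hi

section BraidRelations

variable {M : Type*} [Monoid M] {f : Fin n → M}

lemma prod_map_braidWord_comm
    (hcomm : ∀ i j : Fin n, (i : ℕ) + 1 < j → f i * f j = f j * f i)
    (hbraid : ∀ i j : Fin n, (j : ℕ) = i + 1 → f i * f j * f i = f j * f i * f j) (i j : Fin n) :
    ((braidWord i j).map f).prod = ((braidWord j i).map f).prod := by
  simp only [braidWord, or_comm]
  split_ifs with hadj
  · simp only [List.map_cons, List.map_nil, List.prod_cons, List.prod_nil, mul_one, ← mul_assoc]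
    rcases hadj with h | h
    · exact hbraid i j h.symm
    · exact (hbraid j i h.symm).symm
  · simp only [List.map_cons, List.map_nil, List.prod_cons, List.prod_nil, mul_one]
    obtain h | h | h : i = j ∨ (i : ℕ) + 1 < j ∨ (j : ℕ) + 1 < i := by
      rw [Fin.ext_iff]; omega
    · rw [h]
    · exact hcomm i j h
    · exact (hcomm j i h).symm

lemma wordProd_braidWord_comm (i j : Fin n) : wordProd (braidWord i j) = wordProd (braidWord j i) :=
  prod_map_braidWord_comm (fun _ _ => adjSwap_mul_comm) (fun _ _ => adjSwap_braid) i j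

lemma IsLeftDescent.exists_braidWord_append {w : Perm (Fin (n + 1))} {i j : Fin n}
    (hi : IsLeftDescent w i) (hj : IsLeftDescent w j) (hij : i ≠ j) :
    ∃ u, IsReducedWord (braidWord i j ++ u) ∧ wordProd (braidWord i j ++ u) = w ∧
      IsReducedWord (braidWord j i ++ u) ∧ wordProd (braidWord j i ++ u) = w := by
  obtain ⟨u, hu, hwu⟩ := hi.isReducedPrefix_braidWord hj hij
  have hwu' : wordProd (braidWord j i ++ u) = wordProd (braidWord i j ++ u) := by
    simp only [wordProd_append, wordProd_braidWord_comm]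
  exact ⟨u, hu, hwu, hu.of_wordProd_eq hwu' (by simp [length_braidWord_comm]), hwu'.trans hwu⟩

theorem prod_map_eq_of_isReducedWord
    (hcomm : ∀ i j : Fin n, (i : ℕ) + 1 < j → f i * f j = f j * f i)
    (hbraid : ∀ i j : Fin n, (j : ℕ) = i + 1 → f i * f j * f i = f j * f i * f j)
    {l₁ l₂ : List (Fin n)} (h₁ : IsReducedWord l₁) (h₂ : IsReducedWord l₂)
    (h : wordProd l₁ = wordProd l₂) : (l₁.map f).prod = (l₂.map f).prod := by
  induction hk : l₁.length using Nat.strong_induction_on generalizing l₁ l₂ with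
  | _ k ih =>
  have cons_eq : ∀ {i : Fin n} {t t' : List (Fin n)}, IsReducedWord (i :: t) →
      IsReducedWord (i :: t') → wordProd (i :: t) = wordProd (i :: t') → (i :: t).length = k →
      ((i :: t).map f).prod = ((i :: t').map f).prod := by
    intro i t t' ht ht' he hlen
    simp only [wordProd_cons, mul_right_inj] at he
    simp only [List.map_cons, List.prod_cons]
    rw [ih t.length (by simp [← hlen]) (isReducedWord_cons_iff.1 ht).1
      (isReducedWord_cons_iff.1 ht').1 he rfl]
  have hlen := h₁.length_eq h₂ h
  match l₁, l₂, h₁, h₂ with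
  | [], [], _, _ => rfl
  | [], _ :: _, _, _ | _ :: _, [], _, _ => simp at hlen
  | i :: t₁, j :: t₂, h₁, h₂ =>
    by_cases hij : i = j
    · subst hij
      exact cons_eq h₁ h₂ h hk
    obtain ⟨u, hu, hwu, hu', hwu'⟩ := (isReducedWord_cons_iff.1 h₁).2.exists_braidWord_append
      (h ▸ (isReducedWord_cons_iff.1 h₂).2) hij
    have hbraid_u : ((braidWord i j ++ u).map f).prod = ((braidWord j i ++ u).map f).prod := by
      simp only [List.map_append, List.prod_append, prod_map_braidWord_comm hcomm hbraid]
    obtain ⟨p, hp⟩ := exists_braidWord_eq_cons i j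
    obtain ⟨q, hq⟩ := exists_braidWord_eq_cons j i
    rw [hp, List.cons_append] at hu hwu hbraid_u
    rw [hq, List.cons_append] at hu' hwu' hbraid_u
    calc ((i :: t₁).map f).prod = ((i :: (p ++ u)).map f).prod := cons_eq h₁ hu hwu.symm hk
      _ = ((j :: (q ++ u)).map f).prod := hbraid_u
      _ = ((j :: t₂).map f).prod := cons_eq hu' h₂ (hwu'.trans h) (hk ▸ hu'.length_eq h₁ hwu')

end BraidRelations

section DividedDifference

variable {σ K : Type*} [CommRing K]

lemma X_sub_X_ne_zero [Nontrivial K] {a b : σ} (h : a ≠ b) : (X a - X b : MvPolynomial σ K) ≠ 0 :=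
  sub_ne_zero.2 fun e => h (X_injective e)

lemma rename_rename_perm (τ₁ τ₂ : Perm σ) (f : MvPolynomial σ K) :
    rename τ₁ (rename τ₂ f) = rename ⇑(τ₁ * τ₂) f := by
  rw [rename_rename, Perm.coe_mul]

variable [DecidableEq σ]

lemma rename_swap_rename_swap (a b : σ) (f : MvPolynomial σ K) :
    rename (swap a b) (rename (swap a b) f) = f := by
  rw [rename_rename_perm, swap_mul_self, Perm.coe_one, rename_id_apply]

def IsDividedDifference (P : MvPolynomial σ K → MvPolynomial σ K) (a b : σ) : Prop :=
  ∀ g, P g * (X a - X b) = rename (swap a b) g - g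

namespace IsDividedDifference

variable {P Q : MvPolynomial σ K → MvPolynomial σ K} {a b c d : σ}

lemma neg (hP : IsDividedDifference P a b) : IsDividedDifference (-P) b a := fun g => by
  rw [swap_comm, ← hP g, Pi.neg_apply]
  ring

lemma rename_swap_apply [IsDomain K] (hP : IsDividedDifference P a b) (hab : a ≠ b)
    (g : MvPolynomial σ K) : rename (swap a b) (P g) = P g := by
  have e := congrArg (rename (swap a b)) (hP g)
  simp only [map_mul, map_sub, rename_X, swap_apply_left, swap_apply_right,
    rename_swap_rename_swap] at e
  apply mul_right_cancel₀ (X_sub_X_ne_zero hab)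
  linear_combination -e - hP g

lemma apply_mul_mul (hP : IsDividedDifference P a b) {β : MvPolynomial σ K}
    (hβ : rename (swap a b) β = β) (g : MvPolynomial σ K) :
    P g * (X a - X b) * β = rename (swap a b) (g * β) - g * β := by
  rw [hP g, map_mul, hβ]
  ring

theorem comm [IsDomain K] (hP : IsDividedDifference P a b) (hQ : IsDividedDifference Q c d)
    (hab : a ≠ b) (hcd : c ≠ d) (hac : a ≠ c) (had : a ≠ d) (hbc : b ≠ c) (hbd : b ≠ d)
    (f : MvPolynomial σ K) : P (Q f) = Q (P f) := by
  have e₁ := hP.apply_mul_mul (β := X c - X d)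
    (by simp [swap_apply_of_ne_of_ne, hac.symm, hbc.symm, had.symm, hbd.symm]) (Q f)
  have e₂ := hQ.apply_mul_mul (β := X a - X b)
    (by simp [swap_apply_of_ne_of_ne, hac, hbc, had, hbd]) (P f)
  rw [hQ f, map_sub] at e₁
  rw [hP f, map_sub] at e₂
  have hswap : rename (swap a b) (rename (swap c d) f) =
      rename (swap c d) (rename (swap a b) f) := by
    rw [rename_rename_perm, rename_rename_perm, (disjoint_swap_swap (x := a) (y := b) (z := c)
      (t := d) (by simp [hab, hcd, hac, had, hbc, hbd])).commute.eq]
  apply mul_right_cancel₀ (mul_ne_zero (X_sub_X_ne_zero (K := K) hab) (X_sub_X_ne_zero hcd))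
  linear_combination e₁ - e₂ + hswap

theorem braid_mul [IsDomain K] (hP : IsDividedDifference P a b) (hQ : IsDividedDifference Q b c)
    (hab : a ≠ b) (hbc : b ≠ c) (hac : a ≠ c) (f : MvPolynomial σ K) :
    P (Q (P f)) * ((X a - X b) * (X b - X c) * (X a - X c)) =
      rename (swap a b) (rename (swap b c) (rename (swap a b) f))
        - rename (swap a b) (rename (swap b c) f) - rename (swap b c) (rename (swap a b) f)
        + rename (swap b c) f + rename (swap a b) f - f := by
  have hQg := hQ (P f)
  have hg := congrArg (rename (swap b c)) (hP f)
  simp only [map_mul, map_sub, rename_X, swap_apply_left,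
    swap_apply_of_ne_of_ne hab hac] at hg
  have hQg' : Q (P f) * ((X b - X c) * (X a - X c)) =
      rename (swap b c) (rename (swap a b) f) - rename (swap b c) f - P f * (X a - X c) := by
    linear_combination (X a - X c) * hQg + hg
  have e := hP.apply_mul_mul (β := (X b - X c) * (X a - X c))
    (by simp [swap_apply_of_ne_of_ne hac.symm hbc.symm]; ring) (Q (P f))
  rw [hQg'] at e
  simp only [map_sub, map_mul, rename_X, swap_apply_left,
    swap_apply_of_ne_of_ne hac.symm hbc.symm, hP.rename_swap_apply hab] at e
  linear_combination e + hP f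

theorem braid [IsDomain K] {P Q : MvPolynomial σ K →+ MvPolynomial σ K}
    (hP : IsDividedDifference P a b) (hQ : IsDividedDifference Q b c) (hab : a ≠ b) (hbc : b ≠ c)
    (hac : a ≠ c) (f : MvPolynomial σ K) : P (Q (P f)) = Q (P (Q f)) := by
  have h₁ := hP.braid_mul hQ hab hbc hac f
  have h₂ := hQ.neg.braid_mul hP.neg hbc.symm hab.symm hac.symm f
  simp only [Pi.neg_apply, map_neg, neg_neg, swap_comm c b, swap_comm b a] at h₂
  have hswap : rename (swap a b) (rename (swap b c) (rename (swap a b) f)) =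
      rename (swap b c) (rename (swap a b) (rename (swap b c) f)) := by
    simp only [rename_rename_perm, ← mul_assoc, swap_braid hab hbc hac]
  apply mul_right_cancel₀ (mul_ne_zero (mul_ne_zero (X_sub_X_ne_zero (K := K) hab)
    (X_sub_X_ne_zero hbc)) (X_sub_X_ne_zero hac))
  linear_combination h₁ - h₂ + hswap

end IsDividedDifference

end DividedDifference

section Demazure

variable {K S : Type*} [CommRing K] [IsDomain K] [Semiring S]
  [Module S (MvPolynomial (Fin (n + 1)) K)]
  {D : Fin n → Module.End S (MvPolynomial (Fin (n + 1)) K)}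

lemma demazure_comm (hD : ∀ i, IsDividedDifference (D i) i.castSucc i.succ) {i j : Fin n}
    (h : (i : ℕ) + 1 < j) : D i * D j = D j * D i :=
  LinearMap.ext <| (hD i).comm (hD j) i.castSucc_lt_succ.ne j.castSucc_lt_succ.ne
    (by simp [Fin.ext_iff]; omega) (by simp [Fin.ext_iff]; omega) (by simp [Fin.ext_iff]; omega)
    (by simp [Fin.ext_iff]; omega)

lemma demazure_braid (hD : ∀ i, IsDividedDifference (D i) i.castSucc i.succ) {i j : Fin n}
    (h : (j : ℕ) = i + 1) : D i * D j * D i = D j * D i * D j := by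
  have hji : j.castSucc = i.succ := Fin.ext (by simp [h])
  have hDj := hD j
  rw [hji] at hDj
  exact LinearMap.ext <| IsDividedDifference.braid (P := (D i).toAddMonoidHom)
    (Q := (D j).toAddMonoidHom) (hD i) hDj i.castSucc_lt_succ.ne
    (by simp [Fin.ext_iff]; omega) (by simp [Fin.ext_iff]; omega)

end Demazure

/-- for `w ∈ S_{n+1}`, the composite of Demazure operators along a
reduced expression `w = s_{i_1} ⋯ s_{i_k}` (product of adjacent transpositions of
minimal length) is independent of the choice of reduced expression, so `δ_w` is
well-defined.  (Here the Demazure operator `δ_i = D i`, `i : Fin n`, is the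
`Λ`-linear map determined by `δ_i(f)·(x_i − x_{i+1}) = s_i•f − f`, and composition
is the product in `End_Λ(R)`.) -/
theorem demazure_reduced_word_independent (n : ℕ)
    (D : Fin n → Module.End (symmetricSubalgebra (Fin (n + 1)) ℂ)
      (MvPolynomial (Fin (n + 1)) ℂ))
    (hD : ∀ (i : Fin n) (f : MvPolynomial (Fin (n + 1)) ℂ),
      D i f * (X i.castSucc - X i.succ) =
        rename (⇑(Equiv.swap i.castSucc i.succ)) f - f)
    (w : Equiv.Perm (Fin (n + 1))) (l₁ l₂ : List (Fin n))
    -- l₁ is a reduced expression for w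
    (h₁ : (l₁.map fun i => Equiv.swap i.castSucc i.succ).prod = w)
    (h₁min : ∀ l : List (Fin n),
      (l.map fun i => Equiv.swap i.castSucc i.succ).prod = w → l₁.length ≤ l.length)
    -- l₂ is a reduced expression for w
    (h₂ : (l₂.map fun i => Equiv.swap i.castSucc i.succ).prod = w)
    (h₂min : ∀ l : List (Fin n),
      (l.map fun i => Equiv.swap i.castSucc i.succ).prod = w → l₂.length ≤ l.length) :
    (l₁.map D).prod = (l₂.map D).prod :=
  prod_map_eq_of_isReducedWord (fun _ _ => demazure_comm hD) (fun _ _ => demazure_braid hD)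
    (isReducedWord_iff_length_le.2 fun l he => h₁min l (he.trans h₁))
    (isReducedWord_iff_length_le.2 fun l he => h₂min l (he.trans h₂)) (h₁.trans h₂.symm)
end
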